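/- arXiv:1010.0424 — 6 statements merged into one kernel-verified Lean document; each statement's English description precedes it below -/
import Mathlib

section
/- For each s with 1 ≤ s ≤ 4, the full team F_s consisting of all polyominoes of size s is a winner in the weak (1,2)-achievement game; moreover, the maker has a strategy guaranteeing that after his s-th mark his s marked cells form a connected set (and hence a polyomino of size s). -/
/-- A cell of the rectangular board. -/
abbrev Cell : Type := ℤ × ℤ

/-- Two cells are adjacent if they differ by (±1,0) or (0,±1). -/
def Adjacent (a b : Cell) : Prop :=
  (a.1 - b.1).natAbs + (a.2 - b.2).natAbs = 1

/-- A polyomino is a nonempty subset of ℤ² connected through adjacent cells. -/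
def IsPolyomino (P : Set Cell) : Prop :=
  P.Nonempty ∧ ∀ a ∈ P, ∀ b ∈ P,
    Relation.ReflTransGen (fun x y => x ∈ P ∧ y ∈ P ∧ Adjacent x y) a b

/-- Symmetries of the board: compositions of an integer translation with one of the
eight signed/swap linear maps (rotations by multiples of 90° and reflections). -/
def IsSym (f : Cell → Cell) : Prop :=
  ∃ (t : Cell) (a b s : Bool), ∀ p : Cell,
    f p = (t.1 + (if a then (if s then p.2 else p.1) else -(if s then p.2 else p.1)),
           t.2 + (if b then (if s then p.1 else p.2) else -(if s then p.1 else p.2)))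

/-- Two subsets of ℤ² are congruent if one is the image of the other under a symmetry. -/
def CellCongruent (A B : Set Cell) : Prop := ∃ f, IsSym f ∧ f '' A = B

/-- `Ancestor P Q` (written P ⊑ Q): `Q` contains a subset congruent to `P`. -/
def Ancestor (P Q : Set Cell) : Prop := ∃ S, S ⊆ Q ∧ CellCongruent P S

/-- `Simpler S T` (written S ⪯ T): every member of `T` has an ancestor in `S`. -/
def Simpler (S T : Set (Set Cell)) : Prop := ∀ Q ∈ T, ∃ P ∈ S, Ancestor P Q

/-- A team: a set of polyominoes no member of which is an ancestor of another member. -/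
def IsTeam (F : Set (Set Cell)) : Prop :=
  (∀ P ∈ F, IsPolyomino P) ∧ ∀ P ∈ F, ∀ Q ∈ F, P ≠ Q → ¬ Ancestor P Q

/-- The cells marked so far, given the list of the maker's moves and
the list of the breaker's (pairs of) moves. -/
def markedCells (ms : List Cell) (bs : List (Cell × Cell)) : Set Cell :=
  {c | c ∈ ms ∨ ∃ p ∈ bs, c = p.1 ∨ c = p.2}

/-- Maker strategy: from the maker's past moves and the breaker's past moves,
produce the maker's next mark. -/
abbrev MStrategy := List Cell → List (Cell × Cell) → Cell

/-- Breaker strategy: from the maker's moves so far (including his latest one) and the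
breaker's past moves, produce the breaker's next two marks. -/
abbrev BStrategy := List Cell → List (Cell × Cell) → Cell × Cell

/-- A legal maker strategy always marks a previously unmarked cell. -/
def MLegal (σ : MStrategy) : Prop := ∀ ms bs, σ ms bs ∉ markedCells ms bs

/-- A legal breaker strategy always marks two distinct previously unmarked cells. -/
def BLegal (τ : BStrategy) : Prop :=
  ∀ ms bs, (τ ms bs).1 ≠ (τ ms bs).2 ∧
    (τ ms bs).1 ∉ markedCells ms bs ∧ (τ ms bs).2 ∉ markedCells ms bs

/-- The lists of moves after `n` full rounds of the weak (1,2)-achievement game,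
the maker moving first in each round. -/
def play (σ : MStrategy) (τ : BStrategy) : ℕ → List Cell × List (Cell × Cell)
  | 0 => ([], [])
  | n + 1 =>
      let p := play σ τ n
      let mv := σ p.1 p.2
      (p.1 ++ [mv], p.2 ++ [τ (p.1 ++ [mv]) p.2])

/-- The set of cells marked by the maker during the first `n` rounds. -/
def makerSet (σ : MStrategy) (τ : BStrategy) (n : ℕ) : Set Cell :=
  {c | c ∈ (play σ τ n).1}

/-- The maker achieves `F` in the play of `σ` against `τ`: at some finite stage his
marked cells contain a subset congruent to a member of `F`. -/
def Achieves (F : Set (Set Cell)) (σ : MStrategy) (τ : BStrategy) : Prop :=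
  ∃ n, ∃ Q ∈ F, Ancestor Q (makerSet σ τ n)

/-- A (bounded) set of polyominoes is a winner of the weak (1,2)-achievement game if the
maker has a legal strategy achieving it against every legal breaker strategy. -/
def GameWinner (F : Set (Set Cell)) : Prop :=
  ∃ σ, MLegal σ ∧ ∀ τ, BLegal τ → Achieves F σ τ

/-- A set of polyominoes is bounded if all its members are finite. -/
def Bounded (F : Set (Set Cell)) : Prop := ∀ P ∈ F, P.Finite

/-- `G` is a bounded restriction of `T`: `G = {F_P : P ∈ T}` for a choice of a finite
polyomino ancestor `F_P ⊑ P` for each `P ∈ T`. -/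
def BoundedRestriction (T G : Set (Set Cell)) : Prop :=
  ∃ f : Set Cell → Set Cell,
    (∀ P ∈ T, (f P).Finite ∧ IsPolyomino (f P) ∧ Ancestor (f P) P) ∧ G = f '' T

/-- Winner for a possibly unbounded set of polyominoes: a bounded set is a winner if the
maker can achieve it; an unbounded set is a winner if every bounded restriction is. -/
def Winner (F : Set (Set Cell)) : Prop :=
  (Bounded F ∧ GameWinner F) ∨
  (¬ Bounded F ∧ ∀ G, BoundedRestriction F G → GameWinner G)

/-- The skinny polyomino `S_n`: `n` cells in a horizontal row. -/
def Srow (n : ℕ) : Set Cell := {p | 0 ≤ p.1 ∧ p.1 < (n : ℤ) ∧ p.2 = 0}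

/-- The one-way infinite skinny polyomino `S_∞`. -/
def Sinf : Set Cell := {p | 0 ≤ p.1 ∧ p.2 = 0}

/-- The L-tromino `L_2`. -/
def L2 : Set Cell := {(0, 0), (1, 0), (1, 1)}

/-- The L-tetromino `L_3`. -/
def L3 : Set Cell := {(0, 0), (1, 0), (2, 0), (2, 1)}

/-- The T-tetromino `T_2`. -/
def T2 : Set Cell := {(0, 0), (1, 0), (2, 0), (1, 1)}

/-- The 2×2 square tetromino `C_2`. -/
def C2 : Set Cell := {(0, 0), (1, 0), (0, 1), (1, 1)}

/-- The S-tetromino `Z_2`. -/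
def Z2 : Set Cell := {(0, 0), (1, 0), (1, 1), (2, 1)}

/-- `C_n`: a horizontal row of `n` cells plus the cells above its two end cells. -/
def Cpoly (n : ℕ) : Set Cell :=
  {p | 0 ≤ p.1 ∧ p.1 < (n : ℤ) ∧ p.2 = 0} ∪ {(0, 1), ((n : ℤ) - 1, 1)}

/-- `Z_n`: a horizontal row of `n` cells plus the cell above one end cell and the cell
below the other end cell. -/
def Zpoly (n : ℕ) : Set Cell :=
  {p | 0 ≤ p.1 ∧ p.1 < (n : ℤ) ∧ p.2 = 0} ∪ {(0, 1), ((n : ℤ) - 1, -1)}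

/-- A polyomino is skinny if all its cells lie in one row or one column. -/
def Skinny (P : Set Cell) : Prop :=
  (∃ r, ∀ p ∈ P, p.2 = r) ∨ (∃ c, ∀ p ∈ P, p.1 = c)

/-- A 2-paving: an irreflexive symmetric relation on cells in which every cell is
related to at most two other cells. -/
def TwoPaving (R : Cell → Cell → Prop) : Prop :=
  (∀ a, ¬ R a a) ∧ (∀ a b, R a b → R b a) ∧
  ∀ a, ∃ b c, ∀ d, R a d → d = b ∨ d = c

/-- The paving strategy based on `R`: a legal breaker strategy that marks every currently
unmarked cell related by `R` to the maker's last move. -/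
def PavingStrategy (R : Cell → Cell → Prop) (τ : BStrategy) : Prop :=
  BLegal τ ∧ ∀ ms bs, ∀ last ∈ ms.getLast?, ∀ c, R last c →
    c ∉ markedCells ms bs → (c = (τ ms bs).1 ∨ c = (τ ms bs).2)

/-- `Q` is killed by `R`: every subset of ℤ² congruent to `Q` contains two related cells. -/
def Killed (R : Cell → Cell → Prop) (Q : Set Cell) : Prop :=
  ∀ S : Set Cell, CellCongruent Q S → ∃ a ∈ S, ∃ b ∈ S, R a b

/-- The unbounded team `W = {S_∞, T_2} ∪ {C_n : n ≥ 2} ∪ {Z_n : n ≥ 2}`. -/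
def Wteam : Set (Set Cell) :=
  {Sinf, T2} ∪ {P | ∃ n, 2 ≤ n ∧ P = Cpoly n} ∪ {P | ∃ n, 2 ≤ n ∧ P = Zpoly n}

/-!
The maker marks a free cell adjacent to one of his own cells whenever there is one. A
polyomino of `k ≤ 3` cells has more than `2k` neighbouring cells (at least 4, 6 and 7 for
`k = 1, 2, 3`), while after `k` rounds the breaker has marked only `2k` cells. So in each of
the first four rounds a free neighbour exists and the maker's cells stay connected. Starting
from a fixed first cell, only finitely many such polyominoes can arise, and the neighbour
count is checked on all of them.
-/

namespace PolyominoGame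

lemma adjacent_comm {a b : Cell} : Adjacent a b ↔ Adjacent b a := by
  unfold Adjacent
  omega

lemma ancestor_refl (P : Set Cell) : Ancestor P P :=
  ⟨P, subset_rfl, id, ⟨(0, 0), true, true, false, fun p => by simp⟩, Set.image_id P⟩

lemma encard_setOf_mem_of_nodup {α : Type*} {l : List α} (hl : l.Nodup) :
    {x | x ∈ l}.encard = l.length := by
  classical
  rw [← List.coe_toFinset, Set.encard_coe_eq_coe_finsetCard, List.toFinset_card_of_nodup hl]

lemma isPolyomino_singleton (a : Cell) : IsPolyomino {a} :=
  ⟨⟨a, rfl⟩, fun x hx y hy => by rw [hx, hy]⟩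

lemma IsPolyomino.insert_of_adjacent {P : Set Cell} {c d : Cell} (hP : IsPolyomino P)
    (hd : d ∈ P) (hcd : Adjacent c d) : IsPolyomino (insert c P) := by
  set R : Cell → Cell → Prop := fun x y =>
    x ∈ insert c P ∧ y ∈ insert c P ∧ Adjacent x y
  have : Std.Symm R := ⟨fun x y h => ⟨h.2.1, h.1, adjacent_comm.mp h.2.2⟩⟩
  have lift : ∀ a ∈ P, ∀ b ∈ P, Relation.ReflTransGen R a b := fun a ha b hb =>
    Relation.ReflTransGen.mono (fun x y h => ⟨Or.inr h.1, Or.inr h.2.1, h.2.2⟩) _ _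
      (hP.2 a ha b hb)
  have from_c : ∀ b ∈ P, Relation.ReflTransGen R c b := fun b hb =>
    .head ⟨Or.inl rfl, Or.inr hd, hcd⟩ (lift d hd b hb)
  refine ⟨⟨c, Or.inl rfl⟩, ?_⟩
  rintro a (rfl | ha) b (rfl | hb)
  · exact .refl
  · exact from_c b hb
  · exact Relation.ReflTransGen.stdSymm.symm _ _ (from_c a ha)
  · exact lift a ha b hb

def neighbours (c : Cell) : List Cell :=
  [(c.1 + 1, c.2), (c.1 - 1, c.2), (c.1, c.2 + 1), (c.1, c.2 - 1)]

lemma adjacent_of_mem_neighbours {c d : Cell} (h : c ∈ neighbours d) : Adjacent c d := by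
  simp only [neighbours, List.mem_cons, List.not_mem_nil, or_false] at h
  rcases h with rfl | rfl | rfl | rfl <;> simp [Adjacent]

def frontier (ms : List Cell) : List Cell :=
  (ms.flatMap neighbours).filter (· ∉ ms)

lemma mem_frontier {c : Cell} {ms : List Cell} (h : c ∈ frontier ms) :
    c ∉ ms ∧ ∃ d ∈ ms, Adjacent c d := by
  obtain ⟨hc, hcms⟩ := List.mem_filter.mp h
  obtain ⟨d, hd, hcd⟩ := List.mem_flatMap.mp hc
  exact ⟨of_decide_eq_true hcms, d, hd, adjacent_of_mem_neighbours hcd⟩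

def markedList (ms : List Cell) (bs : List (Cell × Cell)) : List Cell :=
  ms ++ bs.flatMap fun p => [p.1, p.2]

lemma mem_markedCells_iff {c : Cell} {ms : List Cell} {bs : List (Cell × Cell)} :
    c ∈ markedCells ms bs ↔ c ∈ markedList ms bs := by
  simp [markedCells, markedList]

def freshCell (l : List Cell) : Cell :=
  ((l.map fun p => p.1.natAbs).sum + 1, 0)

lemma freshCell_not_mem (l : List Cell) : freshCell l ∉ l := by
  intro h
  have := List.le_sum_of_mem (List.mem_map_of_mem (f := fun p : Cell => p.1.natAbs) h)
  simp only [freshCell] at this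
  omega

def growStrategy : MStrategy := fun ms bs =>
  match (frontier ms).filter (· ∉ markedList ms bs) with
  | c :: _ => c
  | [] => freshCell (markedList ms bs)

lemma growStrategy_legal : MLegal growStrategy := by
  intro ms bs
  rw [mem_markedCells_iff, growStrategy]
  split
  next c _ h =>
    have hc : c ∈ (frontier ms).filter (· ∉ markedList ms bs) := h ▸ List.mem_cons_self
    exact of_decide_eq_true (List.mem_filter.mp hc).2
  next => exact freshCell_not_mem _

lemma growStrategy_mem_frontier {ms : List Cell} {bs : List (Cell × Cell)}
    (h : ∃ c ∈ frontier ms, c ∉ markedList ms bs) : growStrategy ms bs ∈ frontier ms := by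
  obtain ⟨c, hc, hcm⟩ := h
  rw [growStrategy]
  split
  next a _ h =>
    have ha : a ∈ (frontier ms).filter (· ∉ markedList ms bs) := h ▸ List.mem_cons_self
    exact (List.mem_filter.mp ha).1
  next h =>
    exact absurd (List.mem_filter.mpr ⟨hc, by simpa using hcm⟩) (h ▸ List.not_mem_nil)

lemma exists_unmarked_of_card_frontier {ms : List Cell} {bs : List (Cell × Cell)}
    (h : 2 * bs.length < (frontier ms).toFinset.card) :
    ∃ c ∈ frontier ms, c ∉ markedList ms bs := by
  by_contra! hall
  have hsub : (frontier ms).toFinset ⊆ (bs.flatMap fun p => [p.1, p.2]).toFinset := by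
    intro c hc
    rw [List.mem_toFinset] at hc ⊢
    simpa [markedList, (mem_frontier hc).1] using hall c hc
  have hlen : (bs.flatMap fun p => [p.1, p.2]).length = 2 * bs.length := by
    simp [List.length_flatMap, mul_comm]
  have := (Finset.card_le_card hsub).trans (List.toFinset_card_le _)
  omega

/-- The lists of cells `growStrategy` can have marked after `k` rounds, provided every mark
after the first was adjacent to an earlier one. -/
def growths : ℕ → List (List Cell)
  | 0 => []
  | 1 => [[freshCell []]]
  | k + 2 => (growths (k + 1)).flatMap fun l => (frontier l).map (l ++ [·])

lemma mem_growths_succ_succ {k : ℕ} {l : List Cell} {c : Cell} (hl : l ∈ growths (k + 1))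
    (hc : c ∈ frontier l) : l ++ [c] ∈ growths (k + 2) :=
  List.mem_flatMap.mpr ⟨l, hl, List.mem_map_of_mem hc⟩

lemma card_frontier_of_mem_growths :
    ∀ k ∈ Finset.Icc 1 3, ∀ l ∈ growths k, 2 * k < (frontier l).toFinset.card := by
  decide

lemma nodup_length_isPolyomino_of_mem_growths :
    ∀ k, ∀ l ∈ growths k, l.Nodup ∧ l.length = k ∧ IsPolyomino {x | x ∈ l}
  | 0, _, hl => absurd hl List.not_mem_nil
  | 1, _, hl => by
    rw [List.mem_singleton.mp hl]
    exact ⟨List.nodup_singleton _, rfl, by simpa using isPolyomino_singleton _⟩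
  | k + 2, _, hl' => by
    obtain ⟨l, hl, hlc⟩ := List.mem_flatMap.mp hl'
    obtain ⟨c, hc, rfl⟩ := List.mem_map.mp hlc
    obtain ⟨hnodup, hlen, hpoly⟩ := nodup_length_isPolyomino_of_mem_growths (k + 1) l hl
    obtain ⟨hcl, d, hd, hcd⟩ := mem_frontier hc
    have hset : {x | x ∈ l ++ [c]} = insert c {x | x ∈ l} := by
      ext
      simp [or_comm]
    refine ⟨List.nodup_append.mpr ⟨hnodup, List.nodup_singleton c, ?_⟩, by simp [hlen], ?_⟩
    · rintro a ha b hb rfl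
      exact hcl (List.mem_singleton.mp hb ▸ ha)
    · rw [hset]
      exact IsPolyomino.insert_of_adjacent hpoly hd hcd

lemma length_play_snd (σ : MStrategy) (τ : BStrategy) : ∀ k, (play σ τ k).2.length = k
  | 0 => rfl
  | k + 1 => by simp [play, length_play_snd σ τ k]

lemma play_fst_mem_growths (τ : BStrategy) :
    ∀ k, 1 ≤ k → k ≤ 4 → (play growStrategy τ k).1 ∈ growths k
  | 0, h, _ => absurd h (by decide)
  | 1, _, _ => List.mem_singleton_self _
  | k + 2, _, hk => by
    have hl := play_fst_mem_growths τ (k + 1) (by omega) (by omega)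
    have hcard := card_frontier_of_mem_growths (k + 1) (by simp; omega) _ hl
    have hbs := length_play_snd growStrategy τ (k + 1)
    exact mem_growths_succ_succ hl (growStrategy_mem_frontier
      (exists_unmarked_of_card_frontier (by rw [hbs]; exact hcard)))

theorem isPolyomino_makerSet_growStrategy (τ : BStrategy) {k : ℕ} (h1 : 1 ≤ k) (h4 : k ≤ 4) :
    IsPolyomino (makerSet growStrategy τ k) ∧ (makerSet growStrategy τ k).encard = k := by
  obtain ⟨hnodup, hlen, hpoly⟩ :=
    nodup_length_isPolyomino_of_mem_growths k _ (play_fst_mem_growths τ k h1 h4)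
  exact ⟨hpoly, (encard_setOf_mem_of_nodup hnodup).trans (congrArg _ hlen)⟩

end PolyominoGame

/-- for `1 ≤ s ≤ 4`, the full team of all polyominoes of size `s` is a
winner; moreover, the maker has a strategy guaranteeing that after his `s`-th mark his
`s` marked cells form a connected set, hence a polyomino of size `s`. -/
theorem stmt2 (s : ℕ) (h1 : 1 ≤ s) (h4 : s ≤ 4) :
    GameWinner {P | IsPolyomino P ∧ P.encard = (s : ℕ∞)} ∧
    ∃ σ, MLegal σ ∧ ∀ τ, BLegal τ →
      IsPolyomino (makerSet σ τ s) ∧ (makerSet σ τ s).encard = (s : ℕ∞) := by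
  have grown τ := PolyominoGame.isPolyomino_makerSet_growStrategy τ h1 h4
  have legal := PolyominoGame.growStrategy_legal
  exact ⟨⟨_, legal, fun τ _ => ⟨s, _, grown τ, PolyominoGame.ancestor_refl _⟩⟩,
    _, legal, fun τ _ => grown τ⟩
end

section
/- The unbounded team W = {S_∞, T_2} ∪ {C_n : n ≥ 2} ∪ {Z_n : n ≥ 2} is a winner, i.e., every bounded restriction of W is a winner in the weak (1,2)-achievement game. -/
/-! The maker builds a straight segment, starting at the origin and extending it at either end.
Every cell that would complete a target with a single further maker move must be taken by the
breaker at once. When both ends of a segment of length `k` are blocked, the breaker's `2k` cells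
already contain the `2(k - 2)` cells beside the interior of the segment (each completes a `T_2`),
so one of the four cells beside the two end cells is free, and the maker turns there. The
breaker's `2k + 2` cells are then forced to be exactly the two ends and the cells completing a
`T_2`, `C_k`, `Z_k` or `Z_2`, so nothing lies above the corner. From then on the maker raises a
column there; each new cell threatens a `C` and a `Z` on the two sides of its top, which uses up
both breaker moves. Thus after `2N + 2` rounds the maker holds a target or a straight segment of
length `N`. Every finite ancestor of `S_∞` is an ancestor of some `S_N`. -/

namespace PolyominoGame

open Function

lemma IsSym.comp {g f : Cell → Cell} (hg : IsSym g) (hf : IsSym f) : IsSym (g ∘ f) := by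
  obtain ⟨t, a, b, s, hg⟩ := hg
  obtain ⟨t', a', b', s', hf⟩ := hf
  -- translation `g t'`; the linear parts compose, `g`'s swap permuting the signs of `f`
  refine ⟨g t', if s then a == b' else a == a', if s then b == a' else b == b', xor s s',
    fun p => ?_⟩
  simp only [comp_apply, hf, hg]
  cases a <;> cases b <;> cases s <;> cases a' <;> cases b' <;> cases s' <;>
    simp <;> constructor <;> ring

lemma IsSym.injective {f : Cell → Cell} (hf : IsSym f) : Injective f := by
  obtain ⟨t, a, b, s, hf⟩ := hf
  intro p q h
  rw [hf, hf] at h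
  cases a <;> cases b <;> cases s <;> simp [Prod.ext_iff] at h ⊢ <;> omega

lemma isSym_id : IsSym id := ⟨(0, 0), true, true, false, fun p => by simp⟩

lemma Ancestor.trans {P Q R : Set Cell} (hPQ : Ancestor P Q) (hQR : Ancestor Q R) :
    Ancestor P R := by
  obtain ⟨S, hSQ, f, hf, rfl⟩ := hPQ
  obtain ⟨T, hTR, g, hg, rfl⟩ := hQR
  exact ⟨g '' (f '' P), (Set.image_mono hSQ).trans hTR, g ∘ f, IsSym.comp hg hf,
    Set.image_comp g f P⟩

lemma ancestor_of_mapsTo {P M : Set Cell} {g : Cell → Cell} (hg : IsSym g)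
    (h : Set.MapsTo g P M) : Ancestor P M :=
  ⟨g '' P, h.image_subset, g, hg, rfl⟩

lemma ancestor_preimage {g : Cell → Cell} (hg : IsSym g) (M : Set Cell) :
    Ancestor (g ⁻¹' M) M :=
  ancestor_of_mapsTo hg fun _ h => h

lemma ancestor_of_subset {P M : Set Cell} (h : P ⊆ M) : Ancestor P M :=
  ancestor_of_mapsTo isSym_id h

def shiftLeft (q : Cell) : Cell := (q.1 - 1, q.2)

def rotLeft (q : Cell) : Cell := (-q.2, q.1)

def rotHalf (q : Cell) : Cell := (-q.1, -q.2)

def rotRight (q : Cell) : Cell := (q.2, -q.1)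

def flipRow (q : Cell) : Cell := (q.1, -q.2)

def reverseRow (k : ℕ) (q : Cell) : Cell := ((k : ℤ) - 1 - q.1, q.2)

def toArm (a : ℕ) (q : Cell) : Cell := ((a : ℤ) - 1 - q.2, q.1)

lemma isSym_shiftLeft : IsSym shiftLeft :=
  ⟨(-1, 0), true, true, false, fun p => by simp [shiftLeft]; ring⟩

lemma isSym_rotLeft : IsSym rotLeft := ⟨(0, 0), false, true, true, fun p => by simp [rotLeft]⟩

lemma isSym_rotHalf : IsSym rotHalf :=
  ⟨(0, 0), false, false, false, fun p => by simp [rotHalf]⟩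

lemma isSym_rotRight : IsSym rotRight := ⟨(0, 0), true, false, true, fun p => by simp [rotRight]⟩

lemma isSym_flipRow : IsSym flipRow := ⟨(0, 0), true, false, false, fun p => by simp [flipRow]⟩

lemma isSym_reverseRow (k : ℕ) : IsSym (reverseRow k) :=
  ⟨((k : ℤ) - 1, 0), false, true, false, fun p => by simp [reverseRow]; ring⟩

lemma isSym_toArm (a : ℕ) : IsSym (toArm a) :=
  ⟨((a : ℤ) - 1, 0), false, true, true, fun p => by simp [toArm]; ring⟩

def rotations : List (Cell → Cell) := [id, rotLeft, rotHalf, rotRight]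

def rowSymmetries (k : ℕ) : List (Cell → Cell) :=
  [id, flipRow, reverseRow k, reverseRow k ∘ flipRow]

def Lshape (a b : ℕ) : Set Cell := Srow a ∪ {q | q.1 = (a : ℤ) - 1 ∧ 0 ≤ q.2 ∧ q.2 < b}

lemma mem_srow {k : ℕ} {q : Cell} : q ∈ Srow k ↔ 0 ≤ q.1 ∧ q.1 < k ∧ q.2 = 0 := Iff.rfl

lemma mem_lshape {a b : ℕ} {q : Cell} :
    q ∈ Lshape a b ↔ (0 ≤ q.1 ∧ q.1 < a ∧ q.2 = 0) ∨ (q.1 = (a : ℤ) - 1 ∧ 0 ≤ q.2 ∧ q.2 < b) :=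
  Iff.rfl

lemma srow_subset_lshape (a b : ℕ) : Srow a ⊆ Lshape a b := Set.subset_union_left

lemma insert_srow (k : ℕ) : insert ((k : ℤ), 0) (Srow k) = Srow (k + 1) := by
  ext ⟨i, j⟩; simp [Srow]; omega

lemma preimage_shiftLeft_insert_srow (k : ℕ) :
    shiftLeft ⁻¹' insert (-1, 0) (Srow k) = Srow (k + 1) := by
  ext ⟨i, j⟩; simp [Srow, shiftLeft]; omega

lemma insert_srow_eq_lshape {k : ℕ} (hk : 1 ≤ k) :
    insert ((k : ℤ) - 1, 1) (Srow k) = Lshape k 2 := by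
  ext ⟨i, j⟩; simp [Srow, Lshape]; omega

lemma insert_lshape (a b : ℕ) : insert ((a : ℤ) - 1, (b : ℤ)) (Lshape a b) = Lshape a (b + 1) := by
  ext ⟨i, j⟩; simp [Lshape, Srow]; omega

lemma rotations_spec {G : Cell → Cell} (hG : G ∈ rotations) : IsSym G ∧ G (0, 0) = (0, 0) := by
  simp only [rotations, List.mem_cons, List.not_mem_nil, or_false] at hG
  rcases hG with rfl | rfl | rfl | rfl
  exacts [⟨isSym_id, rfl⟩, ⟨isSym_rotLeft, by simp [rotLeft]⟩, ⟨isSym_rotHalf, by simp [rotHalf]⟩,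
    ⟨isSym_rotRight, by simp [rotRight]⟩]

lemma rowSymmetries_spec {k : ℕ} {G : Cell → Cell} (hG : G ∈ rowSymmetries k) :
    IsSym G ∧ G ⁻¹' Srow k = Srow k ∧
      ∀ q ∈ ({(-1, 0), ((k : ℤ), 0)} : Set Cell), G q ∈ ({(-1, 0), ((k : ℤ), 0)} : Set Cell) := by
  simp only [rowSymmetries, List.mem_cons, List.not_mem_nil, or_false] at hG
  rcases hG with rfl | rfl | rfl | rfl
  · exact ⟨isSym_id, rfl, fun q hq => hq⟩
  · refine ⟨isSym_flipRow, ?_, ?_⟩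
    · ext ⟨i, j⟩; simp [Srow, flipRow]
    · simp [flipRow]
  · refine ⟨isSym_reverseRow k, ?_, ?_⟩
    · ext ⟨i, j⟩; simp [Srow, reverseRow]; omega
    · simp [reverseRow]
  · refine ⟨IsSym.comp (isSym_reverseRow k) isSym_flipRow, ?_, ?_⟩
    · ext ⟨i, j⟩; simp [Srow, reverseRow, flipRow]; omega
    · simp [reverseRow, flipRow]

def targets (N : ℕ) : Set (Set Cell) :=
  {Srow N, T2} ∪ {P | ∃ n, 2 ≤ n ∧ P = Cpoly n} ∪ {P | ∃ n, 2 ≤ n ∧ P = Zpoly n}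

def HasTarget (N : ℕ) (M : Set Cell) : Prop := ∃ Q ∈ targets N, Ancestor Q M

lemma HasTarget.mono {N : ℕ} {M M' : Set Cell} (h : HasTarget N M) (hM : M ⊆ M') :
    HasTarget N M' := by
  obtain ⟨Q, hQ, hQM⟩ := h
  exact ⟨Q, hQ, Ancestor.trans hQM (ancestor_of_subset hM)⟩

lemma HasTarget.of_preimage {N : ℕ} {M : Set Cell} {g : Cell → Cell} (hg : IsSym g)
    (h : HasTarget N (g ⁻¹' M)) : HasTarget N M := by
  obtain ⟨Q, hQ, hQM⟩ := h
  exact ⟨Q, hQ, Ancestor.trans hQM (ancestor_preimage hg M)⟩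

lemma hasTarget_of_mapsTo {N : ℕ} {Q X : Set Cell} (hQ : Q ∈ targets N) {g : Cell → Cell}
    (hg : IsSym g) (h : Set.MapsTo g Q X) : HasTarget N X :=
  ⟨Q, hQ, ancestor_of_mapsTo hg h⟩

lemma srow_mem_targets (N : ℕ) : Srow N ∈ targets N := by simp [targets]

lemma t2_mem_targets (N : ℕ) : T2 ∈ targets N := by simp [targets]

lemma cpoly_mem_targets (N : ℕ) {n : ℕ} (hn : 2 ≤ n) : Cpoly n ∈ targets N :=
  Or.inl (Or.inr ⟨n, hn, rfl⟩)

lemma zpoly_mem_targets (N : ℕ) {n : ℕ} (hn : 2 ≤ n) : Zpoly n ∈ targets N :=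
  Or.inr ⟨n, hn, rfl⟩

section Targets

variable {N : ℕ}

lemma hasTarget_of_srow_subset {k : ℕ} {X : Set Cell} (hk : N ≤ k) (h : Srow k ⊆ X) :
    HasTarget N X :=
  hasTarget_of_mapsTo (srow_mem_targets N) isSym_id fun q hq =>
    h ⟨hq.1, hq.2.1.trans_le (by exact_mod_cast hk), hq.2.2⟩

lemma hasTarget_lshape {a b : ℕ} (hb : N ≤ b) : HasTarget N (Lshape a b) :=
  hasTarget_of_mapsTo (srow_mem_targets N) (isSym_toArm a) fun q ⟨h0, hN, h2⟩ =>
    Or.inr ⟨by simp [toArm, h2], h0, hN.trans_le (by exact_mod_cast hb)⟩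

lemma hasTarget_srow_lateral {k : ℕ} {i j : ℤ} (hi : 1 ≤ i) (hik : i + 2 ≤ k)
    (hj : j = 1 ∨ j = -1) : HasTarget N (insert (i, j) (Srow k)) := by
  refine hasTarget_of_mapsTo (t2_mem_targets N) (g := fun q => (i - 1 + q.1, j * q.2)) ?_ ?_
  · rcases hj with rfl | rfl
    · exact ⟨(i - 1, 0), true, true, false, fun p => by simp⟩
    · exact ⟨(i - 1, 0), true, false, false, fun p => by simp⟩
  · intro q hq
    simp only [T2, Set.mem_insert_iff, Set.mem_singleton_iff] at hq
    rcases hq with rfl | rfl | rfl | rfl <;> simp [Srow] <;> omega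

lemma hasTarget_corner_C {k : ℕ} (hk : 2 ≤ k) : HasTarget N (insert (0, 1) (Lshape k 2)) :=
  hasTarget_of_mapsTo (cpoly_mem_targets N hk) isSym_id fun q hq => by
    simp only [Cpoly, Set.mem_union, Set.mem_insert_iff,
      Set.mem_singleton_iff] at hq
    rcases hq with ⟨h0, h1, h2⟩ | rfl | rfl <;> simp [Lshape, Srow, *]

lemma hasTarget_corner_Z {k : ℕ} (hk : 2 ≤ k) : HasTarget N (insert (0, -1) (Lshape k 2)) :=
  hasTarget_of_mapsTo (zpoly_mem_targets N hk) (isSym_reverseRow k) fun q hq => by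
    simp only [Zpoly, Set.mem_union, Set.mem_insert_iff,
      Set.mem_singleton_iff] at hq
    rcases hq with ⟨h0, h1, h2⟩ | rfl | rfl <;> simp [Lshape, Srow, reverseRow, *]
    omega

lemma hasTarget_corner_T {k : ℕ} (hk : 2 ≤ k) :
    HasTarget N (insert ((k : ℤ) - 1, -1) (Lshape k 2)) := by
  refine hasTarget_of_mapsTo (t2_mem_targets N) (g := fun q => ((k : ℤ) - 1 - q.2, 1 - q.1))
    ⟨((k : ℤ) - 1, 1), false, false, true, fun p => by simp [sub_eq_add_neg]⟩ ?_
  intro q hq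
  simp only [T2, Set.mem_insert_iff, Set.mem_singleton_iff] at hq
  rcases hq with rfl | rfl | rfl | rfl <;> simp [Lshape, Srow]
  omega

lemma hasTarget_arm_C {a b : ℕ} (ha : 2 ≤ a) (hb : 1 ≤ b) :
    HasTarget N (insert ((a : ℤ) - 2, (b : ℤ)) (Lshape a (b + 1))) :=
  hasTarget_of_mapsTo (cpoly_mem_targets N (n := b + 1) (by omega)) (isSym_toArm a) fun q hq => by
    simp only [Cpoly, Set.mem_union, Set.mem_insert_iff,
      Set.mem_singleton_iff] at hq
    rcases hq with ⟨h0, h1, h2⟩ | rfl | rfl <;> simp [Lshape, Srow, toArm, *] <;> omega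

lemma hasTarget_arm_Z {a b : ℕ} (ha : 2 ≤ a) (hb : 1 ≤ b) :
    HasTarget N (insert ((a : ℤ), (b : ℤ)) (Lshape a (b + 1))) :=
  hasTarget_of_mapsTo (zpoly_mem_targets N (n := b + 1) (by omega)) (isSym_toArm a) fun q hq => by
    simp only [Zpoly, Set.mem_union, Set.mem_insert_iff,
      Set.mem_singleton_iff] at hq
    rcases hq with ⟨h0, h1, h2⟩ | rfl | rfl <;> simp [Lshape, Srow, toArm, *] <;> omega

noncomputable def laterals (k : ℕ) : Finset Cell := Finset.Icc 1 ((k : ℤ) - 2) ×ˢ {1, -1}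

lemma mem_laterals {k : ℕ} {q : Cell} :
    q ∈ laterals k ↔ 1 ≤ q.1 ∧ q.1 + 2 ≤ k ∧ (q.2 = 1 ∨ q.2 = -1) := by
  simp only [laterals, Finset.mem_product, Finset.mem_Icc, Finset.mem_insert,
    Finset.mem_singleton]
  omega

lemma card_laterals {k : ℕ} (hk : 2 ≤ k) : (laterals k).card = 2 * (k - 2) := by
  rw [laterals, Finset.card_product, Int.card_Icc]
  simp only [Finset.card_insert_of_notMem (show (1 : ℤ) ∉ ({-1} : Finset ℤ) by decide),
    Finset.card_singleton]
  omega

noncomputable def blockade (k : ℕ) (c : Cell) : Finset Cell :=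
  laterals k ∪ {(-1, 0), ((k : ℤ), 0), (0, 1), (0, -1), ((k : ℤ) - 1, -1), c}

lemma card_blockade {k : ℕ} {c : Cell} (hk : 2 ≤ k) (hc : c.2 = 1) (hck : (k : ℤ) - 1 ≤ c.1) :
    (blockade k c).card = 2 * k + 2 := by
  obtain ⟨x, y⟩ := c
  simp only at hc hck
  subst hc
  rw [blockade, Finset.card_union_of_disjoint, card_laterals hk]
  · rw [Finset.card_insert_of_notMem, Finset.card_insert_of_notMem, Finset.card_insert_of_notMem,
      Finset.card_insert_of_notMem, Finset.card_insert_of_notMem, Finset.card_singleton] <;>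
      simp [Prod.ext_iff] <;> omega
  · rw [Finset.disjoint_right]
    intro q hq hlat
    rw [mem_laterals] at hlat
    simp only [Finset.mem_insert, Finset.mem_singleton, Prod.ext_iff] at hq
    omega

lemma hasTarget_insert_lateral {k : ℕ} {q : Cell} {X : Set Cell} (hq : q ∈ laterals k)
    (hX : Srow k ⊆ X) : HasTarget N (insert q X) := by
  rw [mem_laterals] at hq
  exact (hasTarget_srow_lateral hq.1 hq.2.1 hq.2.2).mono (Set.insert_subset_insert hX)

end Targets

section Play

variable (σ : MStrategy) (τ : BStrategy)

def makerMove (n : ℕ) : Cell := σ (play σ τ n).1 (play σ τ n).2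

def breakerMove (n : ℕ) : Cell × Cell :=
  τ ((play σ τ n).1 ++ [makerMove σ τ n]) (play σ τ n).2

def marked (n : ℕ) : Set Cell := markedCells (play σ τ n).1 (play σ τ n).2

def breakerCells (n : ℕ) : Finset Cell :=
  ((play σ τ n).2.flatMap fun p => [p.1, p.2]).toFinset

variable {σ τ}

lemma play_succ (n : ℕ) :
    play σ τ (n + 1) =
      ((play σ τ n).1 ++ [makerMove σ τ n], (play σ τ n).2 ++ [breakerMove σ τ n]) := rfl

lemma makerSet_succ (n : ℕ) :
    makerSet σ τ (n + 1) = insert (makerMove σ τ n) (makerSet σ τ n) := by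
  ext c; simp [makerSet, play_succ, or_comm]

lemma breakerCells_succ (n : ℕ) :
    breakerCells σ τ (n + 1) =
      insert (breakerMove σ τ n).1 (insert (breakerMove σ τ n).2 (breakerCells σ τ n)) := by
  ext c; simp [breakerCells, play_succ]

lemma breakerCells_subset_succ (n : ℕ) : breakerCells σ τ n ⊆ breakerCells σ τ (n + 1) := by
  rw [breakerCells_succ]
  exact (Finset.subset_insert _ _).trans (Finset.subset_insert _ _)

lemma marked_eq (n : ℕ) : marked σ τ n = makerSet σ τ n ∪ breakerCells σ τ n := by
  ext c; simp [marked, markedCells, makerSet, breakerCells]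

lemma card_breakerCells (hτ : BLegal τ) (n : ℕ) : (breakerCells σ τ n).card = 2 * n := by
  induction n with
  | zero => simp [breakerCells, play]
  | succ n ih =>
    obtain ⟨hne, h1, h2⟩ := hτ ((play σ τ n).1 ++ [makerMove σ τ n]) (play σ τ n).2
    have hsub : ∀ c ∈ breakerCells σ τ n,
        c ∈ markedCells ((play σ τ n).1 ++ [makerMove σ τ n]) (play σ τ n).2 := by
      intro c hc
      have : c ∈ marked σ τ n := by rw [marked_eq]; exact Or.inr hc
      rcases this with h | h
      exacts [Or.inl (List.mem_append_left _ h), Or.inr h]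
    rw [breakerCells_succ, Finset.card_insert_of_notMem, Finset.card_insert_of_notMem, ih]
    · ring
    · exact fun h => h2 (hsub _ h)
    · simp only [Finset.mem_insert, not_or]
      exact ⟨hne, fun h => h1 (hsub _ h)⟩

lemma finite_markedCells (ms : List Cell) (bs : List (Cell × Cell)) :
    (markedCells ms bs).Finite := by
  refine ((List.finite_toSet ms).union ((bs.finite_toSet.image Prod.fst).union
    (bs.finite_toSet.image Prod.snd))).subset ?_
  rintro c (h | ⟨p, hp, rfl | rfl⟩)
  exacts [Or.inl h, Or.inr (Or.inl ⟨p, hp, rfl⟩), Or.inr (Or.inr ⟨p, hp, rfl⟩)]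

end Play

section Machine

variable {S : Type*} (init : S) (next : List Cell → List (Cell × Cell) → S → Cell × S)

def machineState (ms : List Cell) (bs : List (Cell × Cell)) : S :=
  if ms = [] then init
  else (next ms.dropLast bs.dropLast (machineState ms.dropLast bs.dropLast)).2
termination_by ms.length
decreasing_by
  simp only [List.length_dropLast]
  exact Nat.sub_lt (List.length_pos_iff.mpr ‹_›) one_pos

def machineStrategy : MStrategy := fun ms bs => (next ms bs (machineState init next ms bs)).1

lemma machineState_concat (ms : List Cell) (bs : List (Cell × Cell)) (x : Cell)
    (y : Cell × Cell) :
    machineState init next (ms ++ [x]) (bs ++ [y]) =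
      (next ms bs (machineState init next ms bs)).2 := by
  rw [machineState, if_neg (by simp)]
  simp only [List.dropLast_concat]

end Machine

inductive MakerState
  | start
  | origin
  | seg (g : Cell → Cell) (k : ℕ)
  | ell (g : Cell → Cell) (a b : ℕ)
  | done

def extensions (g : Cell → Cell) (k : ℕ) : List (Cell × MakerState) :=
  [(g (k, 0), .seg g (k + 1)), (g (-1, 0), .seg (g ∘ shiftLeft) (k + 1))]

def corners (g : Cell → Cell) (k : ℕ) : List (Cell × MakerState) :=
  (rowSymmetries k).map fun G => (g (G ((k : ℤ) - 1, 1)), .ell (g ∘ G) k 2)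

def candidates : MakerState → List (Cell × MakerState)
  | .start => [((0, 0), .origin)]
  | .origin => rotations.map fun G => (G (1, 0), .seg G 2)
  | .seg g k => extensions g k ++ corners g k
  | .ell g a b => [(g ((a : ℤ) - 1, b), .ell g a (b + 1))]
  | .done => []

open Classical in
noncomputable def next (N : ℕ) (ms : List Cell) (bs : List (Cell × Cell)) (s : MakerState) :
    Cell × MakerState :=
  if h : ∃ c ∉ markedCells ms bs, HasTarget N (insert c {x | x ∈ ms}) then (h.choose, .done)
  else ((candidates s).find? fun p => p.1 ∉ markedCells ms bs).getD
    ((finite_markedCells ms bs).infinite_compl.nonempty.some, .done)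

noncomputable def strategy (N : ℕ) : MStrategy := machineStrategy .start (next N)

section Next

open Classical

variable {N : ℕ} {ms : List Cell} {bs : List (Cell × Cell)} {s : MakerState}

lemma next_notMem : (next N ms bs s).1 ∉ markedCells ms bs := by
  unfold next
  split_ifs with h
  · exact h.choose_spec.1
  · cases hf : (candidates s).find? fun p => p.1 ∉ markedCells ms bs with
    | none => exact (finite_markedCells ms bs).infinite_compl.nonempty.some_mem
    | some p => simpa using List.find?_some hf

lemma strategy_legal (N : ℕ) : MLegal (strategy N) := fun _ _ => next_notMem

lemma hasTarget_insert_next (h : ∃ c ∉ markedCells ms bs, HasTarget N (insert c {x | x ∈ ms})) :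
    HasTarget N (insert (next N ms bs s).1 {x | x ∈ ms}) := by
  rw [next, dif_pos h]
  exact h.choose_spec.2

variable (hno : ¬ ∃ c ∉ markedCells ms bs, HasTarget N (insert c {x | x ∈ ms}))
include hno

lemma next_mem_of_blocked {l₁ l₂ : List (Cell × MakerState)} (hs : candidates s = l₁ ++ l₂)
    (hl₁ : ∀ p ∈ l₁, p.1 ∈ markedCells ms bs) (hl₂ : ∃ p ∈ l₂, p.1 ∉ markedCells ms bs) :
    next N ms bs s ∈ l₂ ∧ (next N ms bs s).1 ∉ markedCells ms bs := by
  have h₁ : l₁.find? (fun p => p.1 ∉ markedCells ms bs) = none := by simpa using hl₁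
  obtain ⟨p, hp, hpfree⟩ := hl₂
  cases hf : l₂.find? fun p => p.1 ∉ markedCells ms bs with
  | none => exact absurd hpfree (by simpa using List.find?_eq_none.mp hf p hp)
  | some q =>
    rw [next, dif_neg hno, hs, List.find?_append, h₁, Option.none_or, hf, Option.getD_some]
    exact ⟨List.mem_of_find?_eq_some hf, by simpa using List.find?_some hf⟩

lemma next_eq_of_blocked {l₁ l₂ : List (Cell × MakerState)} {p : Cell × MakerState}
    (hs : candidates s = l₁ ++ p :: l₂) (hl₁ : ∀ q ∈ l₁, q.1 ∈ markedCells ms bs)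
    (hp : p.1 ∉ markedCells ms bs) : next N ms bs s = p := by
  have h₁ : l₁.find? (fun p => p.1 ∉ markedCells ms bs) = none := by simpa using hl₁
  rw [next, dif_neg hno, hs, List.find?_append, h₁, Option.none_or,
    List.find?_cons_of_pos (by simpa using hp), Option.getD_some]

end Next

section Board

variable {N : ℕ} {σ : MStrategy} {τ : BStrategy} {n : ℕ} {g : Cell → Cell}

def HasWinningMove (N : ℕ) (σ : MStrategy) (τ : BStrategy) (n : ℕ) : Prop :=
  ∃ c ∉ marked σ τ n, HasTarget N (insert c (makerSet σ τ n))

lemma preimage_insert_apply (hg : IsSym g) (c : Cell) (M : Set Cell) :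
    g ⁻¹' insert (g c) M = insert c (g ⁻¹' M) := by
  ext q; simp [(IsSym.injective hg).eq_iff]

lemma preimage_makerSet_succ (hg : IsSym g) {c : Cell} (hc : makerMove σ τ n = g c) :
    g ⁻¹' makerSet σ τ (n + 1) = insert c (g ⁻¹' makerSet σ τ n) := by
  rw [makerSet_succ, hc, preimage_insert_apply hg]

lemma mem_breakerCells_of_hasTarget (hno : ¬ HasWinningMove N σ τ n) (hg : IsSym g)
    {X : Set Cell} (hX : g ⁻¹' makerSet σ τ n = X) {c : Cell} (hc : c ∉ X)
    (hw : HasTarget N (insert c X)) : g c ∈ breakerCells σ τ n := by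
  by_contra hB
  refine hno ⟨g c, ?_, HasTarget.of_preimage hg (hw.mono ?_)⟩
  · rw [marked_eq]
    rintro (h | h)
    exacts [hc (hX ▸ h), hB h]
  · rw [preimage_insert_apply hg, hX]

lemma mem_breakerCells_of_marked {X : Set Cell}
    (hX : g ⁻¹' makerSet σ τ n = X) {c : Cell} (hc : c ∉ X) (h : g c ∈ marked σ τ n) :
    g c ∈ breakerCells σ τ n := by
  rw [marked_eq] at h
  exact h.resolve_left fun h' => hc (hX ▸ h')

lemma card_le_of_mapsTo_breakerCells (hτ : BLegal τ) (hg : IsSym g) {S : Finset Cell}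
    (hS : ∀ q ∈ S, g q ∈ breakerCells σ τ n) : S.card ≤ 2 * n := by
  rw [← card_breakerCells hτ n, ← Finset.card_image_of_injective S (IsSym.injective hg)]
  refine Finset.card_le_card fun x hx => ?_
  obtain ⟨q, hq, rfl⟩ := Finset.mem_image.mp hx
  exact hS q hq

lemma mem_of_mapsTo_breakerCells (hτ : BLegal τ) (hg : IsSym g) {S : Finset Cell}
    (hS : ∀ q ∈ S, g q ∈ breakerCells σ τ n) (hcard : 2 * n ≤ S.card) {q : Cell}
    (hq : g q ∈ breakerCells σ τ n) : q ∈ S := by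
  have himage : S.image g = breakerCells σ τ n := by
    refine Finset.eq_of_subset_of_card_le (fun x hx => ?_) ?_
    · obtain ⟨p, hp, rfl⟩ := Finset.mem_image.mp hx
      exact hS p hp
    · rwa [Finset.card_image_of_injective S (IsSym.injective hg), card_breakerCells hτ]
  rw [← himage, Finset.mem_image] at hq
  obtain ⟨p, hp, hpq⟩ := hq
  rwa [← IsSym.injective hg hpq]

lemma breakerCells_succ_eq (hτ : BLegal τ) {u v : Cell} (huv : u ≠ v)
    (hu : u ∈ breakerCells σ τ (n + 1)) (hv : v ∈ breakerCells σ τ (n + 1))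
    (hu' : u ∉ breakerCells σ τ n) (hv' : v ∉ breakerCells σ τ n) :
    breakerCells σ τ (n + 1) = insert u (insert v (breakerCells σ τ n)) := by
  symm
  refine Finset.eq_of_subset_of_card_le
    (Finset.insert_subset hu (Finset.insert_subset hv (breakerCells_subset_succ n))) ?_
  rw [card_breakerCells hτ, Finset.card_insert_of_notMem (by simp [huv, hu']),
    Finset.card_insert_of_notMem hv', card_breakerCells hτ]
  omega

def Matches (σ : MStrategy) (τ : BStrategy) (n : ℕ) : MakerState → Prop
  | .start => n = 0
  | .origin => n = 1 ∧ makerSet σ τ n = {(0, 0)}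
  | .seg g k => IsSym g ∧ 2 ≤ k ∧ n = k ∧ g ⁻¹' makerSet σ τ n = Srow k
  | .ell g a b => IsSym g ∧ 2 ≤ a ∧ 2 ≤ b ∧ n + 1 = a + b ∧ g ⁻¹' makerSet σ τ n = Lshape a b ∧
      ∀ i j : ℤ, (a : ℤ) - 2 ≤ i → i ≤ a → (b : ℤ) ≤ j → g (i, j) ∉ breakerCells σ τ n
  | .done => False

lemma exists_corner_notMem_marked (hτ : BLegal τ) (hno : ¬ HasWinningMove N σ τ n)
    (hg : IsSym g) (hn : 2 ≤ n) (hM : g ⁻¹' makerSet σ τ n = Srow n)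
    (hends : ∀ q ∈ ({(-1, 0), ((n : ℤ), 0)} : Set Cell), g q ∈ breakerCells σ τ n) :
    ∃ p ∈ corners g n, p.1 ∉ marked σ τ n := by
  -- otherwise the breaker would own the `2n + 2` cells of `blockade`, having only `2n`
  by_contra! hall
  simp only [corners, rowSymmetries, List.map_cons, List.map_nil, List.mem_cons,
    List.not_mem_nil, or_false, forall_eq_or_imp, forall_eq, id, comp_apply, flipRow,
    reverseRow, sub_self] at hall
  have hS : ∀ q ∈ blockade n ((n : ℤ) - 1, 1), g q ∈ breakerCells σ τ n := by
    intro q hq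
    rcases Finset.mem_union.mp hq with hq | hq
    · refine mem_breakerCells_of_hasTarget hno hg hM ?_ (hasTarget_insert_lateral hq subset_rfl)
      rw [mem_laterals] at hq
      rw [mem_srow]
      omega
    · simp only [Finset.mem_insert, Finset.mem_singleton] at hq
      rcases hq with rfl | rfl | rfl | rfl | rfl | rfl
      · exact hends _ (by simp)
      · exact hends _ (by simp)
      · exact mem_breakerCells_of_marked hM (by simp [Srow]) (by simpa using hall.2.2.1)
      · exact mem_breakerCells_of_marked hM (by simp [Srow]) (by simpa using hall.2.2.2)
      · exact mem_breakerCells_of_marked hM (by simp [Srow]) hall.2.1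
      · exact mem_breakerCells_of_marked hM (by simp [Srow]) hall.1
  have := card_le_of_mapsTo_breakerCells hτ hg hS
  rw [card_blockade hn rfl le_rfl] at this
  omega

lemma hasWinningMove_or_matches_ell (hτ : BLegal τ) (hg : IsSym g) {k : ℕ} (hk : 2 ≤ k)
    (hn : n = k + 1) (hM : g ⁻¹' makerSet σ τ n = Lshape k 2)
    (hends : ∀ q ∈ ({(-1, 0), ((k : ℤ), 0)} : Set Cell), g q ∈ breakerCells σ τ n) :
    HasWinningMove N σ τ n ∨ Matches σ τ n (.ell g k 2) := by
  refine or_iff_not_imp_left.mpr fun hno => ⟨hg, hk, le_rfl, by omega, hM, ?_⟩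
  have forced : ∀ c ∉ Lshape k 2, HasTarget N (insert c (Lshape k 2)) →
      g c ∈ breakerCells σ τ n :=
    fun c hc hw => mem_breakerCells_of_hasTarget hno hg hM hc hw
  have hS : ∀ q ∈ blockade k (k, 1), g q ∈ breakerCells σ τ n := by
    intro q hq
    rcases Finset.mem_union.mp hq with hq | hq
    · refine forced q ?_ (hasTarget_insert_lateral hq (srow_subset_lshape k 2))
      rw [mem_laterals] at hq
      rw [mem_lshape]
      omega
    · simp only [Finset.mem_insert, Finset.mem_singleton] at hq
      rcases hq with rfl | rfl | rfl | rfl | rfl | rfl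
      · exact hends _ (by simp)
      · exact hends _ (by simp)
      · exact forced _ (by simp [Lshape, Srow]; omega) (hasTarget_corner_C hk)
      · exact forced _ (by simp [Lshape, Srow]) (hasTarget_corner_Z hk)
      · exact forced _ (by simp [Lshape, Srow]) (hasTarget_corner_T hk)
      · exact forced _ (by simp [Lshape, Srow]; omega)
          (by simpa using hasTarget_arm_Z (N := N) (b := 1) hk le_rfl)
  -- the `2k + 2` forced cells of `blockade` are all the breaker's cells
  intro i j hi hi' hj hB
  have := mem_of_mapsTo_breakerCells hτ hg hS (by rw [card_blockade hk rfl (by simp)]; omega) hB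
  simp only [blockade, Finset.mem_union, mem_laterals, Finset.mem_insert, Finset.mem_singleton,
    Prod.ext_iff] at this
  omega

end Board

section Progress

variable {N : ℕ} {τ : BStrategy} {n : ℕ}

noncomputable def stateAt (N : ℕ) (τ : BStrategy) (n : ℕ) : MakerState :=
  machineState .start (next N) (play (strategy N) τ n).1 (play (strategy N) τ n).2

lemma next_of_stateAt {s : MakerState} (hs : stateAt N τ n = s) :
    next N (play (strategy N) τ n).1 (play (strategy N) τ n).2 s =
      (makerMove (strategy N) τ n, stateAt N τ (n + 1)) :=
  hs ▸ Prod.ext rfl (machineState_concat _ _ _ _ _ _).symm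

lemma makerMove_stateAt_eq {s : MakerState} {p : Cell × MakerState} (hs : stateAt N τ n = s)
    (h : next N (play (strategy N) τ n).1 (play (strategy N) τ n).2 s = p) :
    makerMove (strategy N) τ n = p.1 ∧ stateAt N τ (n + 1) = p.2 := by
  rw [next_of_stateAt hs] at h
  exact ⟨by rw [← h], by rw [← h]⟩

def Progress (N : ℕ) (τ : BStrategy) (n : ℕ) : Prop :=
  HasTarget N (makerSet (strategy N) τ n) ∨ HasWinningMove N (strategy N) τ n ∨
    Matches (strategy N) τ n (stateAt N τ n)

lemma progress_succ_of_start (hs : stateAt N τ n = .start)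
    (hm : Matches (strategy N) τ n .start) (hno : ¬ HasWinningMove N (strategy N) τ n) :
    Progress N τ (n + 1) := by
  obtain rfl : n = 0 := hm
  obtain ⟨hmv, hst⟩ := makerMove_stateAt_eq hs
    (next_eq_of_blocked hno (l₁ := []) (l₂ := []) rfl (by simp) (by simp [play, markedCells]))
  refine Or.inr (Or.inr (hst ▸ ⟨rfl, ?_⟩))
  rw [makerSet_succ, hmv]
  ext c; simp [makerSet, play]

lemma progress_succ_of_origin (hτ : BLegal τ) (hs : stateAt N τ n = .origin)
    (hm : Matches (strategy N) τ n .origin) (hno : ¬ HasWinningMove N (strategy N) τ n) :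
    Progress N τ (n + 1) := by
  obtain ⟨rfl, hM⟩ := hm
  have hfree : ∃ p ∈ candidates .origin, p.1 ∉ marked (strategy N) τ 1 := by
    by_contra! hall
    simp only [candidates, rotations, List.map_cons, List.map_nil, List.mem_cons,
      List.not_mem_nil, or_false, forall_eq_or_imp, forall_eq] at hall
    have hS : ∀ q ∈ ({(1, 0), (0, 1), (-1, 0), (0, -1)} : Finset Cell),
        id q ∈ breakerCells (strategy N) τ 1 := by
      intro q hq
      refine mem_breakerCells_of_marked (g := id) (by rw [Set.preimage_id, hM]) ?_ ?_
      · simp only [Finset.mem_insert, Finset.mem_singleton] at hq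
        rcases hq with rfl | rfl | rfl | rfl <;> simp
      · simp only [Finset.mem_insert, Finset.mem_singleton] at hq
        rcases hq with rfl | rfl | rfl | rfl
        exacts [hall.1, hall.2.1, hall.2.2.1, hall.2.2.2]
    have := card_le_of_mapsTo_breakerCells hτ isSym_id hS
    simp at this
  obtain ⟨hmem, -⟩ := next_mem_of_blocked hno (s := .origin) (l₁ := [])
    (l₂ := rotations.map fun G : Cell → Cell => (G (1, 0), MakerState.seg G 2)) rfl (by simp) hfree
  rw [next_of_stateAt hs, List.mem_map] at hmem
  simp only [Prod.mk.injEq] at hmem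
  obtain ⟨G, hG, hmv', hst'⟩ := hmem
  obtain ⟨hGsym, hG0⟩ := rotations_spec hG
  refine Or.inr (Or.inr (hst' ▸ ⟨hGsym, le_rfl, rfl, ?_⟩))
  have hG0' : G ⁻¹' {(0, 0)} = {(0, 0)} := by
    ext q
    simp only [Set.mem_preimage, Set.mem_singleton_iff]
    exact ⟨fun h => IsSym.injective hGsym (h.trans hG0.symm), fun h => h ▸ hG0⟩
  rw [preimage_makerSet_succ hGsym hmv'.symm, hM, hG0']
  ext ⟨i, j⟩; simp [Srow]; omega

lemma progress_succ_of_corner (hτ : BLegal τ) {g : Cell → Cell} {k : ℕ}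
    (hs : stateAt N τ n = .seg g k) (hm : Matches (strategy N) τ n (.seg g k))
    (hno : ¬ HasWinningMove N (strategy N) τ n)
    (hext : ∀ p ∈ extensions g k, p.1 ∈ marked (strategy N) τ n) : Progress N τ (n + 1) := by
  obtain ⟨hg, hk, rfl, hM⟩ := hm
  obtain ⟨hfwd, hbwd⟩ :
      g (n, 0) ∈ marked (strategy N) τ n ∧ g (-1, 0) ∈ marked (strategy N) τ n := by
    simpa [extensions] using hext
  have hends : ∀ q ∈ ({(-1, 0), ((n : ℤ), 0)} : Set Cell),
      g q ∈ breakerCells (strategy N) τ n := by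
    intro q hq
    simp only [Set.mem_insert_iff, Set.mem_singleton_iff] at hq
    rcases hq with rfl | rfl
    · exact mem_breakerCells_of_marked hM (by simp [Srow]) hbwd
    · exact mem_breakerCells_of_marked hM (by simp [Srow]) hfwd
  obtain ⟨hmem, -⟩ := next_mem_of_blocked hno (s := .seg g n) (l₁ := extensions g n)
    (l₂ := corners g n) rfl hext (exists_corner_notMem_marked hτ hno hg hk hM hends)
  rw [next_of_stateAt hs, corners, List.mem_map] at hmem
  simp only [Prod.mk.injEq] at hmem
  obtain ⟨G, hG, hmv, hst⟩ := hmem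
  obtain ⟨hGsym, hGrow, hGends⟩ := rowSymmetries_spec hG
  have hM' : (g ∘ G) ⁻¹' makerSet (strategy N) τ (n + 1) = Lshape n 2 := by
    rw [Set.preimage_comp, preimage_makerSet_succ hg hmv.symm, hM, preimage_insert_apply hGsym,
      hGrow, insert_srow_eq_lshape (by omega)]
  rcases hasWinningMove_or_matches_ell hτ (IsSym.comp hg hGsym) hk rfl hM'
    (fun q hq => breakerCells_subset_succ n (hends _ (hGends q hq))) with h | h
  · exact Or.inr (Or.inl h)
  · exact Or.inr (Or.inr (hst ▸ h))

lemma progress_succ_of_seg (hτ : BLegal τ) {g : Cell → Cell} {k : ℕ}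
    (hs : stateAt N τ n = .seg g k) (hm : Matches (strategy N) τ n (.seg g k))
    (hno : ¬ HasWinningMove N (strategy N) τ n) : Progress N τ (n + 1) := by
  obtain ⟨hg, hk, hn, hM⟩ := hm
  by_cases hfwd : g (k, 0) ∈ marked (strategy N) τ n
  · by_cases hbwd : g (-1, 0) ∈ marked (strategy N) τ n
    · exact progress_succ_of_corner hτ hs ⟨hg, hk, hn, hM⟩ hno (by simp [extensions, hfwd, hbwd])
    obtain ⟨hmv, hst⟩ := makerMove_stateAt_eq hs (next_eq_of_blocked hno (s := .seg g k)
      (l₁ := [(g (k, 0), .seg g (k + 1))]) rfl (fun p hp => List.mem_singleton.mp hp ▸ hfwd) hbwd)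
    refine Or.inr (Or.inr (hst ▸ ⟨IsSym.comp hg isSym_shiftLeft, by omega, by omega, ?_⟩))
    rw [Set.preimage_comp, preimage_makerSet_succ hg hmv, hM, preimage_shiftLeft_insert_srow]
  · obtain ⟨hmv, hst⟩ := makerMove_stateAt_eq hs
      (next_eq_of_blocked hno (s := .seg g k) (l₁ := []) rfl (by simp) hfwd)
    refine Or.inr (Or.inr (hst ▸ ⟨hg, by omega, by omega, ?_⟩))
    rw [preimage_makerSet_succ hg hmv, hM, insert_srow]

lemma progress_succ_of_ell (hτ : BLegal τ) {g : Cell → Cell} {a b : ℕ}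
    (hs : stateAt N τ n = .ell g a b) (hm : Matches (strategy N) τ n (.ell g a b))
    (hno : ¬ HasWinningMove N (strategy N) τ n) : Progress N τ (n + 1) := by
  obtain ⟨hg, ha, hb, hn, hM, hstrip⟩ := hm
  have hfree : g ((a : ℤ) - 1, b) ∉ marked (strategy N) τ n := by
    rw [marked_eq]
    rintro (h | h)
    · have : ((a : ℤ) - 1, (b : ℤ)) ∈ Lshape a b := hM ▸ h
      simp [Lshape, Srow] at this
      omega
    · exact hstrip _ _ (by omega) (by omega) le_rfl h
  obtain ⟨hmv, hst⟩ := makerMove_stateAt_eq hs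
    (next_eq_of_blocked hno (s := .ell g a b) (l₁ := []) (l₂ := []) rfl (by simp) hfree)
  have hM' : g ⁻¹' makerSet (strategy N) τ (n + 1) = Lshape a (b + 1) := by
    rw [preimage_makerSet_succ hg hmv, hM, insert_lshape]
  by_cases hno' : HasWinningMove N (strategy N) τ (n + 1)
  · exact Or.inr (Or.inl hno')
  refine Or.inr (Or.inr (hst ▸ ⟨hg, ha, by omega, by omega, hM', ?_⟩))
  -- the cells beside the new top complete a `C_{b+1}` and a `Z_{b+1}`: the breaker's whole reply
  have hu := mem_breakerCells_of_hasTarget hno' hg hM' (by simp [Lshape, Srow]; omega)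
    (hasTarget_arm_C ha (by omega))
  have hv := mem_breakerCells_of_hasTarget hno' hg hM' (by simp [Lshape, Srow]; omega)
    (hasTarget_arm_Z ha (by omega))
  have hB := breakerCells_succ_eq hτ
    (fun h => by simpa using (IsSym.injective hg h)) hu hv
    (hstrip _ _ (by omega) (by omega) le_rfl) (hstrip _ _ (by omega) le_rfl le_rfl)
  intro i j hi hi' hj h
  rw [hB, Finset.mem_insert, Finset.mem_insert, (IsSym.injective hg).eq_iff,
    (IsSym.injective hg).eq_iff] at h
  rcases h with h | h | h
  · simp [Prod.ext_iff] at h; omega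
  · simp [Prod.ext_iff] at h; omega
  · exact hstrip i j hi hi' (by omega) h

lemma hasTarget_makerSet_succ (h : HasWinningMove N (strategy N) τ n) :
    HasTarget N (makerSet (strategy N) τ (n + 1)) := by
  rw [makerSet_succ]
  exact hasTarget_insert_next h

lemma progress_succ (hτ : BLegal τ) (h : Progress N τ n) : Progress N τ (n + 1) := by
  rcases h with hwin | hw | hm
  · exact Or.inl (hwin.mono (by rw [makerSet_succ]; exact Set.subset_insert _ _))
  · exact Or.inl (hasTarget_makerSet_succ hw)
  by_cases hw : HasWinningMove N (strategy N) τ n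
  · exact Or.inl (hasTarget_makerSet_succ hw)
  cases hs : stateAt N τ n with
  | start => exact progress_succ_of_start hs (hs ▸ hm) hw
  | origin => exact progress_succ_of_origin hτ hs (hs ▸ hm) hw
  | seg g k => exact progress_succ_of_seg hτ hs (hs ▸ hm) hw
  | ell g a b => exact progress_succ_of_ell hτ hs (hs ▸ hm) hw
  | done => exact (hs ▸ hm).elim

lemma progress (hτ : BLegal τ) (n : ℕ) : Progress N τ n := by
  induction n with
  | zero =>
    refine Or.inr (Or.inr ?_)
    rw [stateAt, play, machineState, if_pos rfl]
    rfl
  | succ n ih => exact progress_succ hτ ih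

lemma exists_hasTarget (N : ℕ) (hτ : BLegal τ) :
    ∃ n, HasTarget N (makerSet (strategy N) τ n) := by
  rcases progress (N := N) hτ (2 * N + 2) with hwin | hw | hm
  · exact ⟨_, hwin⟩
  · exact ⟨_, hasTarget_makerSet_succ hw⟩
  refine ⟨2 * N + 2, ?_⟩
  cases hs : stateAt N τ (2 * N + 2) with
  | start => exact absurd (hs ▸ hm : Matches _ τ _ .start) (by simp [Matches])
  | origin => exact absurd (hs ▸ hm : Matches _ τ _ .origin).1 (by omega)
  | seg g k =>
    obtain ⟨hg, -, hn, hM⟩ := (hs ▸ hm : Matches _ τ _ (.seg g k))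
    exact HasTarget.of_preimage hg (hasTarget_of_srow_subset (by omega) hM.ge)
  | ell g a b =>
    obtain ⟨hg, -, -, hn, hM, -⟩ := (hs ▸ hm : Matches _ τ _ (.ell g a b))
    refine HasTarget.of_preimage hg (hM ▸ ?_)
    by_cases ha : N ≤ a
    · exact hasTarget_of_srow_subset ha (srow_subset_lshape a b)
    · exact hasTarget_lshape (by omega)
  | done => exact (hs ▸ hm : Matches _ τ _ .done).elim

end Progress

lemma exists_ancestor_srow {P : Set Cell} (hP : P.Finite) (h : Ancestor P Sinf) :
    ∃ N, Ancestor P (Srow N) := by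
  obtain ⟨S, hS, f, hf, rfl⟩ := h
  obtain ⟨B, hB⟩ := ((hP.image f).image Prod.fst).bddAbove
  refine ⟨(B + 1).toNat, f '' P, fun q hq => ⟨(hS hq).1, ?_, (hS hq).2⟩, f, hf, rfl⟩
  have := hB (Set.mem_image_of_mem Prod.fst hq)
  omega

lemma simpler_targets {f : Set Cell → Set Cell} (hf : ∀ P ∈ Wteam, Ancestor (f P) P) {N : ℕ}
    (hN : Ancestor (f Sinf) (Srow N)) : Simpler (f '' Wteam) (targets N) := by
  rintro Q (((rfl | rfl) | ⟨n, hn, rfl⟩) | ⟨n, hn, rfl⟩)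
  · exact ⟨f Sinf, ⟨Sinf, by simp [Wteam], rfl⟩, hN⟩
  · exact ⟨f T2, ⟨T2, by simp [Wteam], rfl⟩, hf T2 (by simp [Wteam])⟩
  · have hmem : Cpoly n ∈ Wteam := Or.inl (Or.inr ⟨n, hn, rfl⟩)
    exact ⟨f (Cpoly n), ⟨_, hmem, rfl⟩, hf _ hmem⟩
  · have hmem : Zpoly n ∈ Wteam := Or.inr ⟨n, hn, rfl⟩
    exact ⟨f (Zpoly n), ⟨_, hmem, rfl⟩, hf _ hmem⟩

lemma gameWinner_of_boundedRestriction {G : Set (Set Cell)} (hG : BoundedRestriction Wteam G) :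
    GameWinner G := by
  obtain ⟨f, hf, rfl⟩ := hG
  have hSinf : Sinf ∈ Wteam := by simp [Wteam]
  obtain ⟨N, hN⟩ := exists_ancestor_srow (hf Sinf hSinf).1 (hf Sinf hSinf).2.2
  refine ⟨strategy N, strategy_legal N, fun τ hτ => ?_⟩
  obtain ⟨n, Q, hQ, hQM⟩ := exists_hasTarget N hτ
  obtain ⟨P, hP, hPQ⟩ := simpler_targets (fun P hP => (hf P hP).2.2) hN Q hQ
  exact ⟨n, P, hP, Ancestor.trans hPQ hQM⟩

lemma not_bounded_wteam : ¬ Bounded Wteam := fun h =>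
  (Set.infinite_of_injective_forall_mem (s := Sinf) (f := fun k : ℕ => ((k : ℤ), (0 : ℤ)))
    (fun _ _ h => by simpa using h) fun k => ⟨by positivity, rfl⟩) (h Sinf (by simp [Wteam]))

end PolyominoGame

/-- the unbounded team `W = {S_∞, T_2} ∪ {C_n : n ≥ 2} ∪ {Z_n : n ≥ 2}` is a
winner, i.e. every bounded restriction of `W` is a winner. -/
theorem stmt4 : Winner Wteam ∧ ∀ G, BoundedRestriction Wteam G → GameWinner G :=
  ⟨Or.inr ⟨PolyominoGame.not_bounded_wteam,
    fun _ => PolyominoGame.gameWinner_of_boundedRestriction⟩,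
    fun _ => PolyominoGame.gameWinner_of_boundedRestriction⟩
end

section
/- The teams {S_2}, {S_n, L_2} for every n ≥ 3, and {S_3, C_2, Z_2} are all winners in the weak (1,2)-achievement game. -/
/-!
The maker only ever marks a free cell of a small region around his own cells. After `n` rounds
only `3n` cells are marked, so a region of more than `3n` cells always has a free one.

For `{S_n, L_2}` the maker grows a straight line of `n` cells: with its forward extension and the
`2n` cells alongside it, it spans `3n + 1` cells, and a free side cell gives an `L_2`; the second
move alone already gives `S_2`. For `{S_3, C_2, Z_2}` the maker first builds a domino; of the
eight cells around it, a free one extends it to `S_3` or bends it into an L-tromino. The ten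
cells around an L-tromino are too many for the six breaker marks, and each of the seven free
candidates completes `S_3`, `C_2` or `Z_2`.

All shapes are handled in normalized coordinates and carried onto the board by the maps
`(x, y) ↦ t + x u + y v` with `u` a unit step and `v = ± rot u`, which are exactly its symmetries.
-/

def rot (u : Cell) : Cell := (-u.2, u.1)

def unitSteps : List Cell := [(1, 0), (0, 1), (-1, 0), (0, -1)]

def IsFrame (u v : Cell) : Prop := u ∈ unitSteps ∧ (v = rot u ∨ v = -rot u)

instance (u v : Cell) : Decidable (IsFrame u v) := inferInstanceAs (Decidable (_ ∧ _))

def frame (t u v q : Cell) : Cell :=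
  (t.1 + q.1 * u.1 + q.2 * v.1, t.2 + q.1 * u.2 + q.2 * v.2)

@[simp] lemma frame_zero_zero (t u v : Cell) : frame t u v (0, 0) = t := by simp [frame]

@[simp] lemma frame_one_zero (t u v : Cell) : frame t u v (1, 0) = t + u := by
  simp [frame, Prod.ext_iff]

@[simp] lemma frame_zero_one (t u v : Cell) : frame t u v (0, 1) = t + v := by
  simp [frame, Prod.ext_iff]

lemma frame_zero_mk_zero (u v : Cell) (j : ℤ) : frame 0 u v (j, 0) = j • u := by
  simp [frame, Prod.ext_iff]

lemma frame_comp_frame (t u v t' u' v' : Cell) :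
    frame t u v ∘ frame t' u' v' = frame (frame t u v t') (frame 0 u v u') (frame 0 u v v') := by
  funext q
  simp only [Function.comp, frame, Prod.mk.injEq, Prod.fst_zero, Prod.snd_zero]
  constructor <;> ring

lemma IsFrame.cases_eq {u v : Cell} (h : IsFrame u v) :
    (u = (1, 0) ∧ v = (0, 1)) ∨ (u = (1, 0) ∧ v = (0, -1)) ∨ (u = (0, 1) ∧ v = (-1, 0)) ∨
    (u = (0, 1) ∧ v = (1, 0)) ∨ (u = (-1, 0) ∧ v = (0, -1)) ∨ (u = (-1, 0) ∧ v = (0, 1)) ∨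
    (u = (0, -1) ∧ v = (1, 0)) ∨ (u = (0, -1) ∧ v = (-1, 0)) := by
  obtain ⟨hu, hv⟩ := h
  simp only [unitSteps, List.mem_cons, List.not_mem_nil, or_false] at hu
  rcases hu with rfl | rfl | rfl | rfl <;> rcases hv with rfl | rfl <;> decide

lemma IsFrame.frame_zero {u v u' v' : Cell} (h : IsFrame u v) (h' : IsFrame u' v') :
    IsFrame (frame 0 u v u') (frame 0 u v v') := by
  obtain ⟨hu, rfl | rfl⟩ := h <;> obtain ⟨hu', rfl | rfl⟩ := h' <;>
  · revert hu'; revert u'; revert hu; revert u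
    decide

lemma IsFrame.neg_left {u v : Cell} (h : IsFrame u v) : IsFrame (-u) v := by
  obtain ⟨hu, rfl | rfl⟩ := h <;> revert hu <;> revert u <;> decide

lemma IsFrame.neg_right {u v : Cell} (h : IsFrame u v) : IsFrame u (-v) :=
  ⟨h.1, h.2.symm.imp (fun h => by rw [h, neg_neg]) fun h => by rw [h]⟩

lemma IsFrame.snd_mem {u v : Cell} (h : IsFrame u v) : v ∈ unitSteps := by
  obtain ⟨hu, rfl | rfl⟩ := h <;> revert hu <;> revert u <;> decide

lemma IsFrame.sub_notMem {u v : Cell} (h : IsFrame u v) : v - u ∉ unitSteps := by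
  obtain ⟨hu, rfl | rfl⟩ := h <;> revert hu <;> revert u <;> decide

lemma IsFrame.injective {u v : Cell} (h : IsFrame u v) (t : Cell) :
    Function.Injective (frame t u v) := by
  intro p q hpq
  rcases h.cases_eq with ⟨rfl, rfl⟩ | ⟨rfl, rfl⟩ | ⟨rfl, rfl⟩ | ⟨rfl, rfl⟩ | ⟨rfl, rfl⟩ |
    ⟨rfl, rfl⟩ | ⟨rfl, rfl⟩ | ⟨rfl, rfl⟩ <;>
  simp [frame, Prod.ext_iff] at hpq ⊢ <;> omega

lemma isSym_frame (t : Cell) {u v : Cell} (h : IsFrame u v) : IsSym (frame t u v) := by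
  rcases h.cases_eq with ⟨rfl, rfl⟩ | ⟨rfl, rfl⟩ | ⟨rfl, rfl⟩ | ⟨rfl, rfl⟩ | ⟨rfl, rfl⟩ |
    ⟨rfl, rfl⟩ | ⟨rfl, rfl⟩ | ⟨rfl, rfl⟩
  · exact ⟨t, true, true, false, fun p => by simp [frame]⟩
  · exact ⟨t, true, false, false, fun p => by simp [frame]⟩
  · exact ⟨t, false, true, true, fun p => by simp [frame]⟩
  · exact ⟨t, true, true, true, fun p => by simp [frame]⟩
  · exact ⟨t, false, false, false, fun p => by simp [frame]⟩
  · exact ⟨t, false, true, false, fun p => by simp [frame]⟩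
  · exact ⟨t, true, false, true, fun p => by simp [frame]⟩
  · exact ⟨t, false, false, true, fun p => by simp [frame]⟩

lemma IsSym.exists_frame {f : Cell → Cell} (hf : IsSym f) :
    ∃ t u v, IsFrame u v ∧ f = frame t u v := by
  obtain ⟨⟨t₁, t₂⟩, a, b, s, hf⟩ := hf
  refine ⟨(t₁, t₂), f (1, 0) - (t₁, t₂), f (0, 1) - (t₁, t₂), ?_, funext fun p => ?_⟩ <;>
  cases a <;> cases b <;> cases s <;> simp [hf, frame] <;> decide

lemma IsSym.comp {f g : Cell → Cell} (hf : IsSym f) (hg : IsSym g) : IsSym (f ∘ g) := by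
  obtain ⟨t, u, v, huv, rfl⟩ := hf.exists_frame
  obtain ⟨t', u', v', huv', rfl⟩ := hg.exists_frame
  rw [frame_comp_frame]
  exact isSym_frame _ (huv.frame_zero huv')

lemma Ancestor.trans {P N M : Set Cell} (hPN : Ancestor P N) (hNM : Ancestor N M) :
    Ancestor P M := by
  obtain ⟨S, hSN, f, hf, rfl⟩ := hPN
  obtain ⟨S', hS'M, g, hg, rfl⟩ := hNM
  exact ⟨g ∘ f '' P, (Set.image_comp g f P ▸ Set.image_mono hSN).trans hS'M, g ∘ f,
    hg.comp hf, rfl⟩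

lemma Ancestor.of_frame {P M : Set Cell} (t : Cell) {u v : Cell} (h : IsFrame u v)
    (hP : ∀ q ∈ P, frame t u v q ∈ M) : Ancestor P M :=
  ⟨frame t u v '' P, Set.image_subset_iff.2 hP, frame t u v, isSym_frame t h, rfl⟩

lemma Srow_three : Srow 3 = {(0, 0), (1, 0), (2, 0)} := by
  ext ⟨x, y⟩
  simp only [Srow, Set.mem_ofPred_eq, Set.mem_insert_iff, Set.mem_singleton_iff, Prod.mk.injEq]
  omega

lemma mem_markedCells_iff {c : Cell} {ms : List Cell} {bs : List (Cell × Cell)} :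
    c ∈ markedCells ms bs ↔ c ∈ ms ++ bs.map Prod.fst ++ bs.map Prod.snd := by
  simp only [markedCells, Set.mem_ofPred_eq, List.mem_append, List.mem_map]
  grind

lemma markedCells_finite (ms : List Cell) (bs : List (Cell × Cell)) :
    (markedCells ms bs).Finite :=
  (ms ++ bs.map Prod.fst ++ bs.map Prod.snd).finite_toSet.subset fun _ => mem_markedCells_iff.1

lemma exists_mem_notMem_markedCells_of_card_lt (R : Finset Cell) {ms : List Cell}
    {bs : List (Cell × Cell)} (h : ms.length + 2 * bs.length < R.card) :
    ∃ c ∈ R, c ∉ markedCells ms bs := by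
  by_contra! hR
  have hsub : R ⊆ (ms ++ bs.map Prod.fst ++ bs.map Prod.snd).toFinset := fun c hc => by
    simpa [mem_markedCells_iff] using hR c hc
  have := (Finset.card_le_card hsub).trans (List.toFinset_card_le _)
  simp only [List.length_append, List.length_map] at this
  omega

open Classical in
noncomputable def pickFree (R : Finset Cell) (ms : List Cell) (bs : List (Cell × Cell)) : Cell :=
  if h : ∃ c ∈ R, c ∉ markedCells ms bs then h.choose
  else (markedCells_finite ms bs).exists_notMem.choose

lemma pickFree_notMem (R : Finset Cell) (ms : List Cell) (bs : List (Cell × Cell)) :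
    pickFree R ms bs ∉ markedCells ms bs := by
  unfold pickFree
  split_ifs with h
  · exact h.choose_spec.2
  · exact (markedCells_finite ms bs).exists_notMem.choose_spec

lemma pickFree_mem {R : Finset Cell} {ms : List Cell} {bs : List (Cell × Cell)}
    (h : ∃ c ∈ R, c ∉ markedCells ms bs) : pickFree R ms bs ∈ R := by
  rw [pickFree, dif_pos h]
  exact h.choose_spec.1

noncomputable def regionStrategy (R : List Cell → Finset Cell) : MStrategy :=
  fun ms bs => pickFree (R ms) ms bs

lemma regionStrategy_legal (R : List Cell → Finset Cell) : MLegal (regionStrategy R) :=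
  fun ms bs => pickFree_notMem (R ms) ms bs

lemma length_play (σ : MStrategy) (τ : BStrategy) (n : ℕ) :
    (play σ τ n).1.length = n ∧ (play σ τ n).2.length = n := by
  induction n with
  | zero => simp [play]
  | succ n ih => simp [play, ih.1, ih.2]

lemma exists_play_succ_eq (R : List Cell → Finset Cell) (τ : BStrategy) {n : ℕ}
    (h : 3 * n < (R (play (regionStrategy R) τ n).1).card) :
    ∃ c ∈ R (play (regionStrategy R) τ n).1, c ∉ (play (regionStrategy R) τ n).1 ∧
      (play (regionStrategy R) τ (n + 1)).1 = (play (regionStrategy R) τ n).1 ++ [c] := by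
  obtain ⟨hms, hbs⟩ := length_play (regionStrategy R) τ n
  set p := play (regionStrategy R) τ n
  have hfree : ∃ c ∈ R p.1, c ∉ markedCells p.1 p.2 :=
    exists_mem_notMem_markedCells_of_card_lt _ (by omega)
  refine ⟨pickFree (R p.1) p.1 p.2, pickFree_mem hfree, fun hc => ?_, rfl⟩
  exact pickFree_notMem (R p.1) p.1 p.2
    (mem_markedCells_iff.2 (List.mem_append_left _ (List.mem_append_left _ hc)))

lemma mem_makerSet_iff_of_play_eq {σ : MStrategy} {τ : BStrategy} {n : ℕ} {ms : List Cell}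
    {c d : Cell} (h : (play σ τ n).1 = ms ++ [d]) :
    c ∈ makerSet σ τ n ↔ c ∈ ms ∨ c = d := by
  simp [makerSet, h]

def plusShape : Finset Cell := {(0, 0), (1, 0), (0, 1), (-1, 0), (0, -1)}

lemma play_two_eq_of_opening (R : List Cell → Finset Cell) (τ : BStrategy) (h₀ : R [] = {0})
    (h₁ : ∀ m, R [m] = plusShape.image (m + ·)) :
    ∃ u ∈ unitSteps, (play (regionStrategy R) τ 2).1 = [0, u] := by
  obtain ⟨c, hc, -, hplay₁⟩ := exists_play_succ_eq R τ (n := 0) (by simp [play, h₀])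
  simp only [play, h₀, Finset.mem_singleton] at hc
  have hplay₁' : (play (regionStrategy R) τ 1).1 = [0] := by rw [hplay₁, hc]; rfl
  obtain ⟨d, hd, hd₀, hplay₂⟩ := exists_play_succ_eq R τ (n := 1) (by
    rw [hplay₁', h₁, Finset.card_image_of_injective _ (add_right_injective 0)]; decide)
  rw [hplay₁', h₁] at hd
  rw [hplay₁'] at hd₀ hplay₂
  obtain ⟨q, hq, rfl⟩ := Finset.mem_image.1 hd
  refine ⟨0 + q, ?_, hplay₂⟩
  have hunit : ∀ q ∈ plusShape, q ≠ 0 → q ∈ unitSteps := by decide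
  simp only [zero_add, List.mem_singleton] at hd₀ ⊢
  exact hunit q hq hd₀

def ray (u : Cell) (n : ℕ) : List Cell := (List.range n).map fun j : ℕ => (j : ℤ) • u

lemma ray_two (u : Cell) : ray u 2 = [0, u] := by
  simp [ray, List.range_succ]

lemma ray_succ (u : Cell) (n : ℕ) : ray u (n + 1) = ray u n ++ [(n : ℤ) • u] := by
  simp [ray, List.range_succ]

lemma smul_mem_ray (u : Cell) {n : ℕ} {j : ℤ} (h₀ : 0 ≤ j) (hn : j < n) : j • u ∈ ray u n := by
  refine List.mem_map.2 ⟨j.toNat, List.mem_range.2 ?_, by rw [Int.toNat_of_nonneg h₀]⟩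
  omega

lemma frame_mem_ray_of_mem_Srow (u : Cell) {n : ℕ} {q : Cell} (hq : q ∈ Srow n) :
    frame 0 u (rot u) q ∈ ray u n := by
  obtain ⟨h₀, hn, hq⟩ := hq
  rw [show q = (q.1, 0) from Prod.ext rfl hq, frame_zero_mk_zero]
  exact smul_mem_ray u h₀ hn

lemma ancestor_Srow_ray {u : Cell} (hu : u ∈ unitSteps) (n : ℕ) :
    Ancestor (Srow n) {c | c ∈ ray u n} :=
  .of_frame 0 ⟨hu, Or.inl rfl⟩ fun _ => frame_mem_ray_of_mem_Srow u

lemma ancestor_L2_insert_Srow {n : ℕ} {j s : ℤ} (hn : 2 ≤ n) (hj₀ : 0 ≤ j) (hjn : j < n)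
    (hs : s = 1 ∨ s = -1) : Ancestor L2 (insert (j, s) (Srow n)) := by
  obtain ⟨d, hd, hjd₀, hjdn⟩ : ∃ d : ℤ, (d = 1 ∨ d = -1) ∧ 0 ≤ j + d ∧ j + d < n := by
    by_cases h : j + 1 < n
    · exact ⟨1, Or.inl rfl, by omega, h⟩
    · exact ⟨-1, Or.inr rfl, by omega, by omega⟩
  refine .of_frame (j + d, 0) (u := (-d, 0)) (v := (0, s)) ?_ ?_
  · rcases hd with rfl | rfl <;> rcases hs with rfl | rfl <;> decide
  · simp [L2, Srow, frame]
    omega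

noncomputable def lineNbhd (n : ℕ) : Finset Cell :=
  insert ((n : ℤ), 0) (Finset.Ico 0 (n : ℤ) ×ˢ Finset.Icc (-1) 1)

lemma card_lineNbhd (n : ℕ) : (lineNbhd n).card = 3 * n + 1 := by
  rw [lineNbhd, Finset.card_insert_of_notMem (by simp), Finset.card_product, Int.card_Ico,
    Int.card_Icc]
  simp only [sub_zero, Int.toNat_natCast, show (1 + 1 - -1 : ℤ).toNat = 3 from rfl]
  ring

noncomputable def lineRegion : List Cell → Finset Cell
  | [] => {0}
  | [m] => plusShape.image (m + ·)
  | m₀ :: m₁ :: ms => (lineNbhd (ms.length + 2)).image (frame m₀ (m₁ - m₀) (rot (m₁ - m₀)))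

lemma lineRegion_ray {u : Cell} {n : ℕ} (hn : 2 ≤ n) :
    lineRegion (ray u n) = (lineNbhd n).image (frame 0 u (rot u)) := by
  obtain ⟨k, rfl⟩ : ∃ k, n = k + 2 := ⟨n - 2, by omega⟩
  have h : ray u (k + 2) = 0 :: u :: (List.range k).map fun j : ℕ => ((j + 2 : ℕ) : ℤ) • u := by
    simp only [ray, List.range_succ_eq_map, List.map_cons, List.map_map, Function.comp_def,
      Nat.cast_zero, zero_smul, Nat.cast_succ, zero_add, one_smul]
  rw [h, lineRegion]
  simp

lemma play_succ_eq_ray_or_ancestor_L2 (τ : BStrategy) {u : Cell} (hu : u ∈ unitSteps) {n : ℕ}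
    (hn : 2 ≤ n) (h : (play (regionStrategy lineRegion) τ n).1 = ray u n) :
    (play (regionStrategy lineRegion) τ (n + 1)).1 = ray u (n + 1) ∨
      Ancestor L2 (makerSet (regionStrategy lineRegion) τ (n + 1)) := by
  have hframe : IsFrame u (rot u) := ⟨hu, Or.inl rfl⟩
  obtain ⟨c, hc, hcn, hplay⟩ := exists_play_succ_eq lineRegion τ (n := n) (by
    rw [h, lineRegion_ray hn, Finset.card_image_of_injective _ (hframe.injective 0),
      card_lineNbhd]
    omega)
  rw [h, lineRegion_ray hn] at hc
  rw [h] at hcn hplay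
  obtain ⟨⟨j, s⟩, hq, rfl⟩ := Finset.mem_image.1 hc
  simp only [lineNbhd, Finset.mem_insert, Finset.mem_product, Finset.mem_Ico,
    Finset.mem_Icc, Prod.mk.injEq] at hq
  rcases hq with ⟨rfl, rfl⟩ | ⟨⟨hj₀, hjn⟩, hs₁, hs₂⟩
  · left
    rw [hplay, ray_succ, frame_zero_mk_zero]
  have hs : s = 1 ∨ s = -1 := by
    rcases (by omega : s = 0 ∨ s = 1 ∨ s = -1) with rfl | hs | hs
    · exact absurd (frame_zero_mk_zero u (rot u) j ▸ smul_mem_ray u hj₀ hjn) hcn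
    · exact Or.inl hs
    · exact Or.inr hs
  refine Or.inr ((ancestor_L2_insert_Srow hn hj₀ hjn hs).trans (.of_frame 0 hframe ?_))
  rintro q (rfl | hq) <;> rw [mem_makerSet_iff_of_play_eq hplay]
  · exact Or.inr rfl
  · exact Or.inl (frame_mem_ray_of_mem_Srow u hq)

lemma ray_or_ancestor_L2 (τ : BStrategy) {n : ℕ} (hn : 2 ≤ n) :
    (∃ u ∈ unitSteps, (play (regionStrategy lineRegion) τ n).1 = ray u n) ∨
      ∃ m, Ancestor L2 (makerSet (regionStrategy lineRegion) τ m) := by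
  induction n, hn using Nat.le_induction with
  | base =>
    obtain ⟨u, hu, h⟩ := play_two_eq_of_opening lineRegion τ rfl fun _ => rfl
    exact Or.inl ⟨u, hu, h.trans (ray_two u).symm⟩
  | succ n hn ih =>
    rcases ih with ⟨u, hu, h⟩ | hL2
    · exact (play_succ_eq_ray_or_ancestor_L2 τ hu hn h).imp (fun h' => ⟨u, hu, h'⟩)
        fun h' => ⟨n + 1, h'⟩
    · exact Or.inr hL2

theorem gameWinner_Srow_two : GameWinner {Srow 2} := by
  refine ⟨regionStrategy lineRegion, regionStrategy_legal lineRegion, fun τ _ => ?_⟩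
  obtain ⟨u, hu, h⟩ := play_two_eq_of_opening lineRegion τ rfl fun _ => rfl
  exact ⟨2, Srow 2, rfl, by rw [makerSet, h, ← ray_two]; exact ancestor_Srow_ray hu 2⟩

theorem gameWinner_Srow_L2 {n : ℕ} (hn : 3 ≤ n) : GameWinner {Srow n, L2} := by
  refine ⟨regionStrategy lineRegion, regionStrategy_legal lineRegion, fun τ _ => ?_⟩
  obtain ⟨u, hu, h⟩ | ⟨m, hm⟩ := ray_or_ancestor_L2 τ (by omega : 2 ≤ n)
  · exact ⟨n, Srow n, Or.inl rfl, by rw [makerSet, h]; exact ancestor_Srow_ray hu n⟩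
  · exact ⟨m, L2, Or.inr rfl, hm⟩

/-- For an L-tromino `m₀, m₁, m₂` whose first two cells form a domino: the frame sending `(0, 0)`
to its corner, `(1, 0)` to the other cell of the domino and `(0, 1)` to `m₂`. -/
def cornerFrame (m₀ m₁ m₂ : Cell) : Cell → Cell :=
  if m₂ - m₀ ∈ unitSteps then frame m₀ (m₁ - m₀) (m₂ - m₀) else frame m₁ (m₀ - m₁) (m₂ - m₁)

lemma cornerFrame_corner {a b : Cell} (h : IsFrame a b) (c : Cell) :
    cornerFrame c (c + a) (c + b) = frame c a b := by
  simp [cornerFrame, h.snd_mem]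

lemma cornerFrame_end {a b : Cell} (h : IsFrame a b) (c : Cell) :
    cornerFrame (c + a) c (c + b) = frame c a b := by
  rw [cornerFrame, if_neg (by simpa using h.sub_notMem)]
  simp

def dominoNbhd : Finset Cell :=
  {(0, 0), (1, 0), (-1, 0), (2, 0), (0, 1), (1, 1), (0, -1), (1, -1)}

def trominoNbhd : Finset Cell :=
  {(0, 0), (1, 0), (0, 1), (-1, 0), (2, 0), (1, 1), (0, -1), (1, -1), (0, 2), (-1, 1)}

def trominoRegion : List Cell → Finset Cell
  | [] => {0}
  | [m] => plusShape.image (m + ·)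
  | [m₀, m₁] => dominoNbhd.image (frame m₀ (m₁ - m₀) (rot (m₁ - m₀)))
  | m₀ :: m₁ :: m₂ :: _ => trominoNbhd.image (cornerFrame m₀ m₁ m₂)

lemma ancestor_Srow_three_of_domino {q : Cell} (hq : q = (-1, 0) ∨ q = (2, 0)) :
    Ancestor (Srow 3) {(0, 0), (1, 0), q} := by
  rcases hq with rfl | rfl
  · exact .of_frame (-1, 0) (u := (1, 0)) (v := (0, 1)) (by decide) (by simp [Srow_three, frame])
  · exact .of_frame (0, 0) (u := (1, 0)) (v := (0, 1)) (by decide) (by simp [Srow_three, frame])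

lemma play_three_ancestor_or_tromino (τ : BStrategy) :
    Ancestor (Srow 3) (makerSet (regionStrategy trominoRegion) τ 3) ∨
      ∃ a b c, IsFrame a b ∧ ((play (regionStrategy trominoRegion) τ 3).1 = [c, c + a, c + b] ∨
        (play (regionStrategy trominoRegion) τ 3).1 = [c + a, c, c + b]) := by
  obtain ⟨u, hu, h⟩ := play_two_eq_of_opening trominoRegion τ rfl fun _ => rfl
  have hframe : IsFrame u (rot u) := ⟨hu, Or.inl rfl⟩
  have hR : trominoRegion [0, u] = dominoNbhd.image (frame 0 u (rot u)) := by
    simp [trominoRegion]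
  obtain ⟨d, hd, hdn, hplay⟩ := exists_play_succ_eq trominoRegion τ (n := 2) (by
    rw [h, hR, Finset.card_image_of_injective _ (hframe.injective 0)]
    decide)
  rw [h, hR] at hd
  rw [h] at hdn hplay
  obtain ⟨q, hq, rfl⟩ := Finset.mem_image.1 hd
  have hmaker : ∀ p ∈ ({(0, 0), (1, 0), q} : Set Cell),
      frame 0 u (rot u) p ∈ makerSet (regionStrategy trominoRegion) τ 3 := by
    simp [mem_makerSet_iff_of_play_eq hplay]
  simp only [dominoNbhd, Finset.mem_insert, Finset.mem_singleton] at hq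
  rcases hq with rfl | rfl | hq | hq | rfl | rfl | rfl | rfl
  · simp at hdn
  · simp at hdn
  · exact Or.inl ((ancestor_Srow_three_of_domino (Or.inl hq)).trans (.of_frame 0 hframe hmaker))
  · exact Or.inl ((ancestor_Srow_three_of_domino (Or.inr hq)).trans (.of_frame 0 hframe hmaker))
  all_goals right; rw [hplay]
  · exact ⟨u, rot u, 0, hframe, Or.inl (by simp)⟩
  · exact ⟨-u, rot u, u, hframe.neg_left, Or.inr (by simp [frame, Prod.ext_iff])⟩
  · exact ⟨u, -rot u, 0, hframe.neg_right, Or.inl (by simp [frame, Prod.ext_iff])⟩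
  · exact ⟨-u, -rot u, u, hframe.neg_left.neg_right, Or.inr (by simp [frame, Prod.ext_iff])⟩

lemma exists_ancestor_of_mem_trominoNbhd {q : Cell} (hq : q ∈ trominoNbhd)
    (hq' : q ∉ ({(0, 0), (1, 0), (0, 1)} : Set Cell)) :
    ∃ P ∈ ({Srow 3, C2, Z2} : Set (Set Cell)), Ancestor P {q, (0, 0), (1, 0), (0, 1)} := by
  simp only [trominoNbhd, Finset.mem_insert, Finset.mem_singleton] at hq
  rcases hq with rfl | rfl | rfl | rfl | rfl | rfl | rfl | rfl | rfl | rfl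
  · simp at hq'
  · simp at hq'
  · simp at hq'
  · exact ⟨Srow 3, by simp, .of_frame (-1, 0) (u := (1, 0)) (v := (0, 1)) (by decide)
      (by simp [Srow_three, frame])⟩
  · exact ⟨Srow 3, by simp, .of_frame (0, 0) (u := (1, 0)) (v := (0, 1)) (by decide)
      (by simp [Srow_three, frame])⟩
  · exact ⟨C2, by simp, .of_frame (0, 0) (u := (1, 0)) (v := (0, 1)) (by decide)
      (by simp [C2, frame])⟩
  · exact ⟨Srow 3, by simp, .of_frame (0, -1) (u := (0, 1)) (v := (1, 0)) (by decide)
      (by simp [Srow_three, frame])⟩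
  · exact ⟨Z2, by simp, .of_frame (1, -1) (u := (0, 1)) (v := (-1, 0)) (by decide)
      (by simp [Z2, frame])⟩
  · exact ⟨Srow 3, by simp, .of_frame (0, 0) (u := (0, 1)) (v := (1, 0)) (by decide)
      (by simp [Srow_three, frame])⟩
  · exact ⟨Z2, by simp, .of_frame (-1, 1) (u := (1, 0)) (v := (0, -1)) (by decide)
      (by simp [Z2, frame])⟩

lemma exists_ancestor_play_four (τ : BStrategy) {a b c : Cell} (hab : IsFrame a b)
    (h : (play (regionStrategy trominoRegion) τ 3).1 = [c, c + a, c + b] ∨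
      (play (regionStrategy trominoRegion) τ 3).1 = [c + a, c, c + b]) :
    ∃ P ∈ ({Srow 3, C2, Z2} : Set (Set Cell)),
      Ancestor P (makerSet (regionStrategy trominoRegion) τ 4) := by
  have hR : trominoRegion (play (regionStrategy trominoRegion) τ 3).1 =
      trominoNbhd.image (frame c a b) := by
    rcases h with h | h <;> rw [h, trominoRegion]
    · rw [cornerFrame_corner hab]
    · rw [cornerFrame_end hab]
  have htromino : ∀ p ∈ ({(0, 0), (1, 0), (0, 1)} : Set Cell),
      frame c a b p ∈ (play (regionStrategy trominoRegion) τ 3).1 := by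
    rcases h with h | h <;> simp [h]
  obtain ⟨d, hd, hdn, hplay⟩ := exists_play_succ_eq trominoRegion τ (n := 3) (by
    rw [hR, Finset.card_image_of_injective _ (hab.injective c)]
    decide)
  rw [hR] at hd
  obtain ⟨q, hq, rfl⟩ := Finset.mem_image.1 hd
  obtain ⟨P, hP, hPq⟩ := exists_ancestor_of_mem_trominoNbhd hq fun hq' => hdn (htromino q hq')
  refine ⟨P, hP, hPq.trans (.of_frame c hab ?_)⟩
  rintro p (rfl | hp) <;> rw [mem_makerSet_iff_of_play_eq hplay]
  · exact Or.inr rfl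
  · exact Or.inl (htromino p hp)

theorem gameWinner_Srow_three_C2_Z2 : GameWinner {Srow 3, C2, Z2} := by
  refine ⟨regionStrategy trominoRegion, regionStrategy_legal trominoRegion, fun τ _ => ?_⟩
  rcases play_three_ancestor_or_tromino τ with hS | ⟨a, b, c, hab, h⟩
  · exact ⟨3, Srow 3, by simp, hS⟩
  · obtain ⟨P, hP, hA⟩ := exists_ancestor_play_four τ hab h
    exact ⟨4, P, hP, hA⟩

/-- the teams `{S_2}`, `{S_n, L_2}` for every `n ≥ 3`, and
`{S_3, C_2, Z_2}` are all winners. -/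
theorem stmt5 :
    GameWinner {Srow 2} ∧ (∀ n : ℕ, 3 ≤ n → GameWinner {Srow n, L2}) ∧
    GameWinner {Srow 3, C2, Z2} :=
  ⟨gameWinner_Srow_two, fun _ hn => gameWinner_Srow_L2 hn, gameWinner_Srow_three_C2_Z2⟩
end

section
/- If the breaker follows the paving strategy based on a 2-paving R, then at every stage of the weak (1,2)-achievement game no two cells marked by the maker are related by R. -/
/-! After each round every cell related by `R` to a maker cell is marked: the breaker marks the
unmarked neighbours of the maker's latest cell at once. Hence each new maker cell, being
unmarked, is unrelated to all earlier maker cells. -/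

lemma markedCells_mono {ms ms' : List Cell} {bs bs' : List (Cell × Cell)}
    (hms : ms ⊆ ms') (hbs : bs ⊆ bs') : markedCells ms bs ⊆ markedCells ms' bs' := by
  rintro c (hc | ⟨p, hp, hc⟩)
  · exact Or.inl (hms hc)
  · exact Or.inr ⟨p, hbs hp, hc⟩

def NeighboursMarked (R : Cell → Cell → Prop) (ms : List Cell) (bs : List (Cell × Cell)) :
    Prop :=
  ∀ a ∈ ms, ∀ c, R a c → c ∈ markedCells ms bs

theorem neighboursMarked_play {R : Cell → Cell → Prop} {σ : MStrategy} {τ : BStrategy}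
    (hτ : PavingStrategy R τ) (n : ℕ) :
    NeighboursMarked R (play σ τ n).1 (play σ τ n).2 := by
  induction n with
  | zero => simp [NeighboursMarked, play]
  | succ n ih =>
    set ms := (play σ τ n).1
    set bs := (play σ τ n).2
    have hmarked : markedCells (ms ++ [σ ms bs]) bs ⊆
        markedCells (play σ τ (n + 1)).1 (play σ τ (n + 1)).2 :=
      markedCells_mono (fun _ => id) (List.subset_append_left _ _)
    intro a ha c hac
    rcases List.mem_append.1 ha with ha | ha
    · exact hmarked (markedCells_mono (List.subset_append_left _ _) (fun _ => id) (ih a ha c hac))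
    · obtain rfl : a = σ ms bs := List.mem_singleton.1 ha
      by_cases hc : c ∈ markedCells (ms ++ [σ ms bs]) bs
      · exact hmarked hc
      · have hlast : σ ms bs ∈ (ms ++ [σ ms bs]).getLast? := by simp
        exact Or.inr ⟨_, List.mem_append_right _ (List.mem_singleton_self _),
          hτ.2 _ bs _ hlast c hac hc⟩

theorem NeighboursMarked.not_rel_append {R : Cell → Cell → Prop} {ms : List Cell}
    {bs : List (Cell × Cell)} (hnb : NeighboursMarked R ms bs) (hsymm : ∀ a b, R a b → R b a)
    (hirr : ∀ a, ¬ R a a) (hind : ∀ a ∈ ms, ∀ b ∈ ms, ¬ R a b) {mv : Cell}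
    (hmv : mv ∉ markedCells ms bs) :
    ∀ a ∈ ms ++ [mv], ∀ b ∈ ms ++ [mv], ¬ R a b := by
  have hnew : ∀ a ∈ ms, ¬ R a mv := fun a ha hamv => hmv (hnb a ha mv hamv)
  intro a ha b hb hab
  simp only [List.mem_append, List.mem_singleton] at ha hb
  rcases ha with ha | rfl <;> rcases hb with hb | rfl
  · exact hind a ha b hb hab
  · exact hnew a ha hab
  · exact hnew b hb (hsymm _ _ hab)
  · exact hirr _ hab

/-- if the breaker follows the paving strategy based on a 2-paving `R`,
then at every stage of the game no two cells marked by the maker are related by `R`. -/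
theorem stmt7 (R : Cell → Cell → Prop) (hR : TwoPaving R) (τ : BStrategy)
    (hτ : PavingStrategy R τ) (σ : MStrategy) (hσ : MLegal σ) (n : ℕ) :
    ∀ a ∈ makerSet σ τ n, ∀ b ∈ makerSet σ τ n, ¬ R a b := by
  induction n with
  | zero => simp [makerSet, play]
  | succ n ih => exact (neighboursMarked_play hτ n).not_rel_append hR.2.1 hR.1 ih (hσ _ _)
end

section
/- If a bounded set of polyominoes is killed by some 2-paving R, then it is a loser in the weak (1,2)-achievement game: the breaker wins with the paving strategy based on R. -/
/-!
The paving strategy keeps an invariant: the maker's cells are pairwise unrelated by `R`, and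
every `R`-neighbour of a maker cell is already marked. Each new maker cell is unmarked, hence
unrelated to his earlier cells, and it has at most two `R`-neighbours, which the breaker marks
at once. So the maker's cells never contain two related cells, while every copy of a killed
polyomino does.
-/

lemma Set.Infinite.exists_pair_superset {α : Type*} {s t : Set α} (hs : s.Infinite)
    (hts : t ⊆ s) {b c : α} (htbc : t ⊆ {b, c}) :
    ∃ x y, x ≠ y ∧ x ∈ s ∧ y ∈ s ∧ t ⊆ {x, y} := by
  have hfin : t.Finite := (Set.toFinite {b, c}).subset htbc
  have hcard : t.ncard ≤ 2 :=
    calc t.ncard ≤ ({b, c} : Set α).ncard := Set.ncard_le_ncard htbc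
      _ ≤ ({c} : Set α).ncard + 1 := Set.ncard_insert_le b {c}
      _ = 2 := by rw [Set.ncard_singleton]
  obtain ⟨u, htu, hus, hu⟩ := hs.exists_superset_ncard_eq hts hfin hcard
  obtain ⟨x, y, hxy, rfl⟩ := Set.ncard_eq_two.mp hu
  exact ⟨x, y, hxy, hus (by simp), hus (by simp), htu⟩

lemma exists_pavingStrategy {R : Cell → Cell → Prop} (hR : TwoPaving R) :
    ∃ τ, PavingStrategy R τ := by
  have hneighbours : ∀ o : Option Cell, ∃ b c, ∀ d, (∃ last ∈ o, R last d) → d = b ∨ d = c := by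
    rintro (_ | l)
    · exact ⟨(0, 0), (0, 0), by simp⟩
    · obtain ⟨b, c, hbc⟩ := hR.2.2 l
      exact ⟨b, c, by simpa using hbc⟩
  have hreply : ∀ (ms : List Cell) (bs : List (Cell × Cell)), ∃ x y, x ≠ y ∧
      x ∈ (markedCells ms bs)ᶜ ∧ y ∈ (markedCells ms bs)ᶜ ∧
      {d | (∃ last ∈ ms.getLast?, R last d) ∧ d ∉ markedCells ms bs} ⊆ {x, y} := by
    intro ms bs
    obtain ⟨b, c, hbc⟩ := hneighbours ms.getLast?
    exact (markedCells_finite ms bs).infinite_compl.exists_pair_superset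
      (fun d hd => hd.2) (fun d hd => hbc d hd.1)
  choose x y hxy hx hy hcover using hreply
  refine ⟨fun ms bs => (x ms bs, y ms bs), fun ms bs => ⟨hxy ms bs, hx ms bs, hy ms bs⟩, ?_⟩
  intro ms bs last hlast c hc hcm
  exact hcover ms bs ⟨⟨last, hlast, hc⟩, hcm⟩

def PavingInvariant (R : Cell → Cell → Prop) (ms : List Cell) (bs : List (Cell × Cell)) :
    Prop :=
  (∀ a ∈ ms, ∀ b ∈ ms, ¬ R a b) ∧ ∀ a ∈ ms, ∀ c, R a c → c ∈ markedCells ms bs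

section PavingInvariant

variable {R : Cell → Cell → Prop} {τ : BStrategy} {ms : List Cell} {bs : List (Cell × Cell)}
  {mv : Cell}

lemma PavingInvariant.not_rel_fresh (hR : TwoPaving R) (hinv : PavingInvariant R ms bs)
    (hmv : mv ∉ markedCells ms bs) {a : Cell} (ha : a ∈ ms) : ¬ R a mv ∧ ¬ R mv a :=
  ⟨fun h => hmv (hinv.2 a ha mv h), fun h => hmv (hinv.2 a ha mv (hR.2.1 _ _ h))⟩

lemma PavingInvariant.concat (hR : TwoPaving R) (hτ : PavingStrategy R τ)
    (hinv : PavingInvariant R ms bs) (hmv : mv ∉ markedCells ms bs) :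
    PavingInvariant R (ms ++ [mv]) (bs ++ [τ (ms ++ [mv]) bs]) := by
  set t := τ (ms ++ [mv]) bs
  have hmono : markedCells ms bs ⊆ markedCells (ms ++ [mv]) (bs ++ [t]) :=
    markedCells_mono (List.subset_append_left _ _) (List.subset_append_left _ _)
  constructor
  · rintro a ha b hb hab
    simp only [List.mem_append, List.mem_singleton] at ha hb
    rcases ha with ha | rfl <;> rcases hb with hb | rfl
    · exact hinv.1 a ha b hb hab
    · exact (hinv.not_rel_fresh hR hmv ha).1 hab
    · exact (hinv.not_rel_fresh hR hmv hb).2 hab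
    · exact hR.1 _ hab
  · rintro a ha c hac
    simp only [List.mem_append, List.mem_singleton] at ha
    rcases ha with ha | rfl
    · exact hmono (hinv.2 a ha c hac)
    by_cases hc : c ∈ markedCells (ms ++ [a]) bs
    · exact markedCells_mono (List.Subset.refl _) (List.subset_append_left _ _) hc
    · exact Or.inr ⟨t, by simp, hτ.2 _ bs a (by simp) c hac hc⟩

lemma pavingInvariant_play (hR : TwoPaving R) (hτ : PavingStrategy R τ) {σ : MStrategy}
    (hσ : MLegal σ) (n : ℕ) : PavingInvariant R (play σ τ n).1 (play σ τ n).2 := by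
  induction n with
  | zero => simp [PavingInvariant, play]
  | succ n ih => exact ih.concat hR hτ (hσ _ _)

end PavingInvariant

lemma not_achieves_of_pavingStrategy {F : Set (Set Cell)} {R : Cell → Cell → Prop}
    (hR : TwoPaving R) (hk : ∀ Q ∈ F, Killed R Q) {τ : BStrategy} (hτ : PavingStrategy R τ)
    {σ : MStrategy} (hσ : MLegal σ) : ¬ Achieves F σ τ := by
  rintro ⟨n, Q, hQ, S, hSsub, hcong⟩
  obtain ⟨a, haS, b, hbS, hab⟩ := hk Q hQ S hcong
  exact (pavingInvariant_play hR hτ hσ n).1 a (hSsub haS) b (hSsub hbS) hab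

theorem stmt8_general (F : Set (Set Cell))
    (R : Cell → Cell → Prop) (hR : TwoPaving R) (hk : ∀ Q ∈ F, Killed R Q) :
    ¬ GameWinner F ∧ ∀ τ, PavingStrategy R τ → ∀ σ, MLegal σ → ¬ Achieves F σ τ := by
  refine ⟨?_, fun τ hτ σ hσ => not_achieves_of_pavingStrategy hR hk hτ hσ⟩
  rintro ⟨σ, hσ, hwins⟩
  obtain ⟨τ, hτ⟩ := exists_pavingStrategy hR
  exact not_achieves_of_pavingStrategy hR hk hτ hσ (hwins τ hτ.1)

/-- a bounded set of polyominoes killed by a 2-paving `R` is a loser;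
the breaker wins with the paving strategy based on `R`. -/
theorem stmt8 (F : Set (Set Cell)) (hpoly : ∀ P ∈ F, IsPolyomino P) (hb : Bounded F)
    (R : Cell → Cell → Prop) (hR : TwoPaving R) (hk : ∀ Q ∈ F, Killed R Q) :
    ¬ GameWinner F ∧ ∀ τ, PavingStrategy R τ → ∀ σ, MLegal σ → ¬ Achieves F σ τ :=
  stmt8_general F R hR hk
end

section
/- Every polyomino with at least 3 cells either is skinny (all of its cells lie in a single row or a single column of ℤ²) or contains a subset congruent to the L-tromino L_2. -/
/-!
If a polyomino is not skinny, connectivity forces it to have both a horizontal and a vertical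
pair of adjacent cells. Walking inside the polyomino from a cell with a horizontal neighbour
to a cell with a vertical neighbour, one meets a cell having both kinds of neighbour: such a
cell together with those two neighbours is a copy of `L2`.
-/

theorem Relation.ReflTransGen.exists_boundary {α : Type*} {r : α → α → Prop} {p : α → Prop}
    {a b : α} (h : Relation.ReflTransGen r a b) (ha : p a) (hb : ¬ p b) :
    ∃ u v, r u v ∧ p u ∧ ¬ p v := by
  induction h with
  | refl => exact absurd ha hb
  | @tail c d _ hcd ih =>
    by_cases hc : p c
    · exact ⟨c, d, hcd, hc, hb⟩
    · exact ih hc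

namespace Adjacent

variable {a b : Cell}

theorem symm (h : Adjacent a b) : Adjacent b a := by
  unfold Adjacent at *; omega

theorem snd_eq_of_fst_ne (h : Adjacent a b) (h1 : a.1 ≠ b.1) : a.2 = b.2 := by
  unfold Adjacent at h; omega

theorem fst_eq_of_snd_ne (h : Adjacent a b) (h2 : a.2 ≠ b.2) : a.1 = b.1 := by
  unfold Adjacent at h; omega

end Adjacent

namespace IsPolyomino

variable {P : Set Cell}

theorem exists_adjacent_of_ne {β : Type*} (hP : IsPolyomino P) (f : Cell → β) {a b : Cell}
    (ha : a ∈ P) (hb : b ∈ P) (hab : f a ≠ f b) :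
    ∃ x ∈ P, ∃ y ∈ P, Adjacent x y ∧ f x ≠ f y := by
  obtain ⟨x, y, ⟨hx, hy, hxy⟩, hfx, hfy⟩ :=
    (hP.2 a ha b hb).exists_boundary (p := fun c => f c = f a) rfl (Ne.symm hab)
  exact ⟨x, hx, y, hy, hxy, hfx ▸ Ne.symm hfy⟩

theorem exists_bend (hP : IsPolyomino P)
    (hhor : ∃ a ∈ P, ∃ a' ∈ P, Adjacent a a' ∧ a.2 = a'.2)
    (hver : ∃ b ∈ P, ∃ b' ∈ P, Adjacent b b' ∧ b.1 = b'.1) :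
    ∃ x ∈ P, ∃ y ∈ P, ∃ z ∈ P, Adjacent x y ∧ x.2 = y.2 ∧ Adjacent y z ∧ y.1 = z.1 := by
  obtain ⟨a, ha, a', ha', haa', ha2⟩ := hhor
  obtain ⟨b, hb, b', hb', hbb', hb1⟩ := hver
  set HasHorizontal : Cell → Prop := fun v => ∃ w ∈ P, Adjacent v w ∧ v.2 = w.2
  by_cases hbH : HasHorizontal b
  · obtain ⟨w, hw, hbw, hw2⟩ := hbH
    exact ⟨w, hw, b, hb, b', hb', hbw.symm, hw2.symm, hbb', hb1⟩
  obtain ⟨u, v, ⟨hu, hv, huv⟩, ⟨w, hw, huw, hw2⟩, hvH⟩ :=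
    (hP.2 a ha b hb).exists_boundary (p := HasHorizontal) ⟨a', ha', haa', ha2⟩ hbH
  have huv2 : u.2 ≠ v.2 := fun h => hvH ⟨u, hu, huv.symm, h.symm⟩
  exact ⟨w, hw, u, hu, v, hv, huw.symm, hw2.symm, huv, huv.fst_eq_of_snd_ne huv2⟩

end IsPolyomino

theorem ancestor_L2_of_bend {P : Set Cell} {x y z : Cell} (hx : x ∈ P) (hy : y ∈ P)
    (hz : z ∈ P) (hxy : Adjacent x y) (hxy2 : x.2 = y.2) (hyz : Adjacent y z)
    (hyz1 : y.1 = z.1) : Ancestor L2 P := by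
  unfold Adjacent at hxy hyz
  refine ⟨{x, y, z}, by simp [Set.insert_subset_iff, hx, hy, hz], ?_⟩
  -- the reflection sending `(0, 0), (1, 0), (1, 1)` to `x, y, z`
  refine ⟨fun p => (x.1 + (if y.1 = x.1 + 1 then p.1 else -p.1),
      y.2 + (if z.2 = y.2 + 1 then p.2 else -p.2)), ?_, ?_⟩
  · exact ⟨(x.1, y.2), decide (y.1 = x.1 + 1), decide (z.2 = y.2 + 1), false, fun p => by simp⟩
  · simp only [L2, Set.image_insert_eq, Set.image_singleton]
    congr! <;> split_ifs <;> omega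

theorem stmt11_general (P : Set Cell) (hP : IsPolyomino P) :
    Skinny P ∨ Ancestor L2 P := by
  by_cases hs : Skinny P
  · exact Or.inl hs
  right
  obtain ⟨hrow, hcol⟩ := not_or.mp hs
  push Not at hrow hcol
  obtain ⟨p, hp⟩ := hP.1
  obtain ⟨q, hq, hpq⟩ := hrow p.2
  obtain ⟨r, hr, hpr⟩ := hcol p.1
  have hhor : ∃ a ∈ P, ∃ a' ∈ P, Adjacent a a' ∧ a.2 = a'.2 := by
    obtain ⟨a, ha, a', ha', haa', h1⟩ := hP.exists_adjacent_of_ne Prod.fst hp hr hpr.symm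
    exact ⟨a, ha, a', ha', haa', haa'.snd_eq_of_fst_ne h1⟩
  have hver : ∃ b ∈ P, ∃ b' ∈ P, Adjacent b b' ∧ b.1 = b'.1 := by
    obtain ⟨b, hb, b', hb', hbb', h2⟩ := hP.exists_adjacent_of_ne Prod.snd hp hq hpq.symm
    exact ⟨b, hb, b', hb', hbb', hbb'.fst_eq_of_snd_ne h2⟩
  obtain ⟨x, hx, y, hy, z, hz, hxy, hxy2, hyz, hyz1⟩ := hP.exists_bend hhor hver
  exact ancestor_L2_of_bend hx hy hz hxy hxy2 hyz hyz1

/-- every polyomino with at least 3 cells is skinny or contains a subset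
congruent to the L-tromino `L_2`. -/
theorem stmt11 (P : Set Cell) (hP : IsPolyomino P) (h3 : 3 ≤ P.encard) :
    Skinny P ∨ Ancestor L2 P :=
  stmt11_general P hP
end
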